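/- arXiv:2106.01637 — 7 statements merged into one kernel-verified Lean document; each statement's English description precedes it below -/
import Mathlib

section
/- Let ℓ ≥ 1, p > 1, and let (β_{ij}) be a symmetric ℓ×ℓ real matrix with β_{ii} > 0 and β_{ij} ≥ 0 for all i ≠ j. Define J(c) = (1/2)|c|² − (1/(2p)) Σ_{i,j} β_{ij} |c_i|^p |c_j|^p and M = {c ∈ ℝ^ℓ : c ≠ 0, |c|² = Σ_{i,j} β_{ij} |c_i|^p |c_j|^p}. Then M is nonempty and the infimum of J over M is attained at some point of M. -/
open Finset

/-!
Writing `N c = ∑ cᵢ²` and `Q c = ∑ βᵢⱼ |cᵢ|ᵖ |cⱼ|ᵖ`, on the Nehari set `N = Q` the functional is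
`J = (1/2 - 1/(2p)) N`, so it suffices to minimise `N` there. Since `Q c ≤ (∑ βᵢⱼ) N(c)ᵖ` and
`p > 1`, the identity `N = Q` forces `N` to stay away from `0` on the Nehari set; hence the set is
closed, and its intersection with a sublevel set of `N` is compact. A rescaled basis vector
`t eᵢ` with `t^(2p-2) = 1/βᵢᵢ` shows that the set is nonempty.
-/

section Nehari

variable {ι : Type*} [Fintype ι]

noncomputable def nehariForm (β : ι → ι → ℝ) (p : ℝ) (c : ι → ℝ) : ℝ :=
  ∑ i, ∑ j, β i j * |c i| ^ p * |c j| ^ p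

def nehariSet (β : ι → ι → ℝ) (p : ℝ) : Set (ι → ℝ) :=
  {c | c ≠ 0 ∧ ∑ i, c i ^ 2 = nehariForm β p c}

lemma continuous_nehariForm (β : ι → ι → ℝ) {p : ℝ} (hp : 0 ≤ p) :
    Continuous (nehariForm β p) := by
  have := Real.continuous_rpow_const hp
  unfold nehariForm
  fun_prop

lemma sum_sq_pos_of_ne_zero {c : ι → ℝ} (hc : c ≠ 0) : 0 < ∑ i, c i ^ 2 := by
  obtain ⟨i, hi⟩ := Function.ne_iff.mp hc
  exact lt_of_lt_of_le (pow_pos (abs_pos.mpr hi) 2 |>.trans_eq (sq_abs _))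
    (single_le_sum (fun j _ => sq_nonneg (c j)) (mem_univ i))

lemma abs_rpow_le_sum_sq_rpow {p : ℝ} (hp : 0 ≤ p) (c : ι → ℝ) (i : ι) :
    |c i| ^ p ≤ (∑ j, c j ^ 2) ^ (p / 2) := by
  have hi : |c i| ≤ (∑ j, c j ^ 2) ^ (1 / 2 : ℝ) := by
    rw [← Real.sqrt_eq_rpow]
    exact Real.abs_le_sqrt (single_le_sum (fun j _ => sq_nonneg (c j)) (mem_univ i))
  calc |c i| ^ p ≤ ((∑ j, c j ^ 2) ^ (1 / 2 : ℝ)) ^ p :=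
        Real.rpow_le_rpow (abs_nonneg _) hi hp
    _ = (∑ j, c j ^ 2) ^ (p / 2) := by
        rw [← Real.rpow_mul (sum_nonneg fun j _ => sq_nonneg (c j))]
        ring_nf

lemma nehariForm_le {β : ι → ι → ℝ} (hβ : ∀ i j, 0 ≤ β i j) {p : ℝ} (hp : 0 ≤ p)
    (c : ι → ℝ) :
    nehariForm β p c ≤ (∑ i, ∑ j, β i j) * (∑ i, c i ^ 2) ^ p := by
  set N := ∑ i, c i ^ 2
  have hN : 0 ≤ N := sum_nonneg fun i _ => sq_nonneg (c i)
  have hpow : N ^ (p / 2) * N ^ (p / 2) = N ^ p := by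
    rw [← Real.rpow_add_of_nonneg hN (by positivity) (by positivity)]
    ring_nf
  rw [nehariForm, sum_mul]
  refine sum_le_sum fun i _ => ?_
  rw [sum_mul]
  refine sum_le_sum fun j _ => ?_
  rw [mul_assoc, ← hpow]
  gcongr
  · exact hβ i j
  · exact abs_rpow_le_sum_sq_rpow hp c i
  · exact abs_rpow_le_sum_sq_rpow hp c j

lemma one_le_mul_rpow_of_mem_nehariSet {β : ι → ι → ℝ} (hβ : ∀ i j, 0 ≤ β i j) {p : ℝ}
    (hp : 1 < p) {c : ι → ℝ} (hc : c ∈ nehariSet β p) :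
    1 ≤ (∑ i, ∑ j, β i j) * (∑ i, c i ^ 2) ^ (p - 1) := by
  set N := ∑ i, c i ^ 2
  have hN : 0 < N := sum_sq_pos_of_ne_zero hc.1
  have hle : N ≤ (∑ i, ∑ j, β i j) * N ^ (p - 1) * N := by
    rw [mul_assoc, ← Real.rpow_add_one hN.ne', sub_add_cancel]
    exact hc.2.trans_le (nehariForm_le hβ (by linarith) c)
  nlinarith

lemma exists_pos_le_sum_sq_of_mem_nehariSet {β : ι → ι → ℝ} (hβ : ∀ i j, 0 ≤ β i j)
    {p : ℝ} (hp : 1 < p) :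
    ∃ δ > 0, ∀ c ∈ nehariSet β p, δ ≤ ∑ i, c i ^ 2 := by
  set S := ∑ i, ∑ j, β i j
  have hS : 0 ≤ S := sum_nonneg fun i _ => sum_nonneg fun j _ => hβ i j
  refine ⟨((S + 1)⁻¹) ^ (p - 1)⁻¹, by positivity, fun c hc => ?_⟩
  have hN : 0 ≤ ∑ i, c i ^ 2 := sum_nonneg fun i _ => sq_nonneg (c i)
  have hNp : 0 ≤ (∑ i, c i ^ 2) ^ (p - 1) := Real.rpow_nonneg hN _
  rw [Real.rpow_inv_le_iff_of_pos (by positivity) hN (by linarith), inv_le_iff_one_le_mul₀' (by positivity)]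
  nlinarith [one_le_mul_rpow_of_mem_nehariSet hβ hp hc]

lemma isClosed_nehariSet {β : ι → ι → ℝ} (hβ : ∀ i j, 0 ≤ β i j) {p : ℝ} (hp : 1 < p) :
    IsClosed (nehariSet β p) := by
  obtain ⟨δ, hδ, hle⟩ := exists_pos_le_sum_sq_of_mem_nehariSet hβ hp
  have hcont : Continuous fun c : ι → ℝ => ∑ i, c i ^ 2 := by fun_prop
  have hset : nehariSet β p =
      {c | ∑ i, c i ^ 2 = nehariForm β p c} ∩ {c | δ ≤ ∑ i, c i ^ 2} := by
    ext c
    refine ⟨fun hc => ⟨hc.2, hle c hc⟩, fun ⟨hQ, hδc⟩ => ⟨?_, hQ⟩⟩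
    rintro rfl
    exact hδ.not_ge (by simpa using hδc)
  rw [hset]
  exact (isClosed_eq hcont (continuous_nehariForm β (by linarith))).inter
    (isClosed_le continuous_const hcont)

lemma isCompact_inter_sum_sq_le {s : Set (ι → ℝ)} (hs : IsClosed s) (R : ℝ) :
    IsCompact (s ∩ {c | ∑ i, c i ^ 2 ≤ R}) := by
  refine (isCompact_univ_pi fun _ => isCompact_Icc (a := -√R) (b := √R)).of_isClosed_subset
    (hs.inter (isClosed_le (by fun_prop) continuous_const)) fun c ⟨_, hc⟩ i _ => ?_
  exact abs_le.mp <| Real.abs_le_sqrt <|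
    (single_le_sum (fun j _ => sq_nonneg (c j)) (mem_univ i)).trans hc

lemma exists_isMinOn_sum_sq {s : Set (ι → ℝ)} (hs : IsClosed s) (hne : s.Nonempty) :
    ∃ c ∈ s, IsMinOn (fun c => ∑ i, c i ^ 2) s c := by
  obtain ⟨c₀, hc₀⟩ := hne
  obtain ⟨c, ⟨hcs, hcc₀⟩, hmin⟩ := (isCompact_inter_sum_sq_le hs (∑ i, c₀ i ^ 2)).exists_isMinOn
    ⟨c₀, hc₀, le_refl (∑ i, c₀ i ^ 2)⟩ (by fun_prop : Continuous fun c : ι → ℝ => ∑ i, c i ^ 2).continuousOn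
  refine ⟨c, hcs, fun c' hc' => ?_⟩
  by_cases h : ∑ i, c' i ^ 2 ≤ ∑ i, c₀ i ^ 2
  · exact hmin ⟨hc', h⟩
  · exact hcc₀.trans (not_le.mp h).le

lemma nehariForm_single [DecidableEq ι] (β : ι → ι → ℝ) {p : ℝ} (hp : 0 < p) (i : ι)
    (t : ℝ) :
    nehariForm β p (Pi.single i t) = β i i * (|t| ^ p) ^ 2 := by
  rw [nehariForm, sum_eq_single i, sum_eq_single i]
  · simp only [Pi.single_eq_same]
    ring
  all_goals
    intros
    simp_all [Pi.single_apply, Real.zero_rpow hp.ne']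

lemma single_mem_nehariSet [DecidableEq ι] {β : ι → ι → ℝ} {p : ℝ} (hp : 1 < p) {i : ι}
    (hβ : 0 < β i i) :
    Pi.single i (β i i ^ (2 - 2 * p)⁻¹) ∈ nehariSet β p := by
  set b := β i i
  set r := (2 - 2 * p)⁻¹
  have hr : r * 2 = 1 + r * p * 2 := by
    linear_combination inv_mul_cancel₀ (by linarith : (2 - 2 * p) ≠ 0)
  refine ⟨by simpa using (Real.rpow_pos_of_pos hβ r).ne', ?_⟩
  rw [nehariForm_single β (by linarith), abs_of_pos (Real.rpow_pos_of_pos hβ r), sum_eq_single i]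
  · simp only [Pi.single_eq_same]
    rw [← Real.rpow_mul hβ.le, ← Real.rpow_natCast, ← Real.rpow_natCast, ← Real.rpow_mul hβ.le,
      ← Real.rpow_mul hβ.le]
    push_cast
    rw [hr, Real.rpow_add hβ, Real.rpow_one]
  · intro j _ hj
    simp [hj]
  · simp

end Nehari

theorem stmt1_general (l : ℕ) (hl : 1 ≤ l) (p : ℝ) (hp : 1 < p)
    (β : Fin l → Fin l → ℝ)
    (hdiag : ∀ i, 0 < β i i)
    (hoff : ∀ i j, i ≠ j → 0 ≤ β i j) :
    ∃ c : Fin l → ℝ,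
      (c ≠ 0 ∧ ∑ i, (c i) ^ 2 = ∑ i, ∑ j, β i j * |c i| ^ p * |c j| ^ p) ∧
      ∀ c' : Fin l → ℝ, c' ≠ 0 →
        ∑ i, (c' i) ^ 2 = ∑ i, ∑ j, β i j * |c' i| ^ p * |c' j| ^ p →
        (1/2) * ∑ i, (c i) ^ 2
            - (1/(2*p)) * ∑ i, ∑ j, β i j * |c i| ^ p * |c j| ^ p
          ≤ (1/2) * ∑ i, (c' i) ^ 2
            - (1/(2*p)) * ∑ i, ∑ j, β i j * |c' i| ^ p * |c' j| ^ p := by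
  have hβ : ∀ i j, 0 ≤ β i j := fun i j =>
    (eq_or_ne i j).elim (fun h => h ▸ (hdiag i).le) (hoff i j)
  obtain ⟨c, ⟨hc, hcM⟩, hmin⟩ := exists_isMinOn_sum_sq (isClosed_nehariSet hβ hp)
    ⟨_, single_mem_nehariSet hp (hdiag ⟨0, hl⟩)⟩
  refine ⟨c, ⟨hc, hcM⟩, fun c' hc' hc'M => ?_⟩
  have hcoef : 0 ≤ 1 / 2 - 1 / (2 * p) := by
    rw [sub_nonneg]
    gcongr
    linarith
  unfold nehariForm at hcM
  rw [← hc'M, ← hcM, ← sub_mul, ← sub_mul]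
  exact mul_le_mul_of_nonneg_left (hmin ⟨hc', hc'M⟩) hcoef

/-- The purely cooperative algebraic Nehari set `M` is nonempty and the infimum of `J`
over `M` is attained. -/
theorem stmt1 (l : ℕ) (hl : 1 ≤ l) (p : ℝ) (hp : 1 < p)
    (β : Fin l → Fin l → ℝ)
    (hsym : ∀ i j, β i j = β j i)
    (hdiag : ∀ i, 0 < β i i)
    (hoff : ∀ i j, i ≠ j → 0 ≤ β i j) :
    ∃ c : Fin l → ℝ,
      (c ≠ 0 ∧ ∑ i, (c i) ^ 2 = ∑ i, ∑ j, β i j * |c i| ^ p * |c j| ^ p) ∧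
      ∀ c' : Fin l → ℝ, c' ≠ 0 →
        ∑ i, (c' i) ^ 2 = ∑ i, ∑ j, β i j * |c' i| ^ p * |c' j| ^ p →
        (1/2) * ∑ i, (c i) ^ 2
            - (1/(2*p)) * ∑ i, ∑ j, β i j * |c i| ^ p * |c j| ^ p
          ≤ (1/2) * ∑ i, (c' i) ^ 2
            - (1/(2*p)) * ∑ i, ∑ j, β i j * |c' i| ^ p * |c' j| ^ p :=
  stmt1_general l hl p hp β hdiag hoff
end

section
/- Let ℓ ≥ 1, p > 1, and let (β_{ij}) be a symmetric ℓ×ℓ real matrix with β_{ii} > 0 and β_{ij} ≥ 0 for all i ≠ j. Then there exists c = (c_1, …, c_ℓ) ∈ ℝ^ℓ with all c_i ≠ 0 solving the algebraic system c_i = Σ_{j=1}^ℓ β_{ij} |c_j|^p |c_i|^{p−2} c_i for all i, provided 1 < p < 2; moreover c can be chosen with all c_i > 0. -/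
/-!
For positive `c` the system reads `β *ᵥ c ^ p = c ^ (2 - p)`, with componentwise powers.
Maximize `Q x = ∑ i j, β i j * x i ^ p * x j ^ p` over the nonnegative part of the unit sphere.
At a maximizer `d`, a coordinate with `d i > 0` satisfies the Lagrange equation
`(β *ᵥ d ^ p) i = Q d * d i ^ (2 - p)`, and a coordinate with `d i = 0` has `(β *ᵥ d ^ p) i = 0`:
otherwise moving mass `ε` into it gains order `ε ^ p` in `Q` but costs only order `ε ^ 2` on the
sphere, and `p < 2`. Rescaling `d` gives a nonnegative nonzero solution `c`. The zero set of `c`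
is decoupled from its support, so gluing `c` with a positive solution of the subsystem on the
zero set (by induction on the number of unknowns) gives a positive solution.
-/

open Finset Matrix Function Filter Topology

section QuadraticExpansion

variable {ι R : Type*} [Fintype ι] [DecidableEq ι] [CommRing R]

theorem Matrix.IsSymm.update_dotProduct_mulVec_update {β : Matrix ι ι R} (hβ : β.IsSymm)
    (w : ι → R) (i : ι) (τ : R) :
    update w i τ ⬝ᵥ β *ᵥ update w i τ
      = w ⬝ᵥ β *ᵥ w + 2 * (τ - w i) * (β *ᵥ w) i + (τ - w i) ^ 2 * β i i := by
  have hupd : update w i τ = w + Pi.single i (τ - w i) := by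
    ext j
    rcases eq_or_ne j i with rfl | hj <;> simp [*]
  have hcross : w ⬝ᵥ β *ᵥ Pi.single i (τ - w i) = (β *ᵥ w) i * (τ - w i) := by
    rw [dotProduct_mulVec, dotProduct_single, ← mulVec_transpose, hβ.eq]
  rw [hupd, mulVec_add, add_dotProduct, dotProduct_add, dotProduct_add, hcross,
    single_dotProduct, single_dotProduct, mulVec_single]
  simp only [Pi.smul_apply, col_apply, MulOpposite.smul_eq_mul_unop, MulOpposite.unop_op]
  ring

end QuadraticExpansion

theorem smul_rpow_of_nonneg {ι : Type*} {t : ℝ} (ht : 0 ≤ t) {x : ι → ℝ} (hx : 0 ≤ x) (p : ℝ) :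
    (t • x) ^ p = t ^ p • x ^ p := by
  ext j
  simp [Real.mul_rpow ht (hx j)]

section Interaction

variable {ι : Type*} [Fintype ι]

noncomputable def interactionEnergy (β : Matrix ι ι ℝ) (p : ℝ) (x : ι → ℝ) : ℝ :=
  x ^ p ⬝ᵥ β *ᵥ x ^ p

def nonnegUnitSphere (ι : Type*) [Fintype ι] : Set (ι → ℝ) := {x | 0 ≤ x ∧ x ⬝ᵥ x = 1}

theorem interactionEnergy_smul (β : Matrix ι ι ℝ) (p : ℝ) {t : ℝ} (ht : 0 ≤ t) {x : ι → ℝ}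
    (hx : 0 ≤ x) : interactionEnergy β p (t • x) = (t ^ 2) ^ p * interactionEnergy β p x := by
  rw [interactionEnergy, interactionEnergy, smul_rpow_of_nonneg ht hx, mulVec_smul,
    smul_dotProduct, dotProduct_smul, smul_eq_mul, smul_eq_mul, ← Real.rpow_pow_comm ht]
  ring

theorem continuous_interactionEnergy (β : Matrix ι ι ℝ) {p : ℝ} (hp : 0 ≤ p) :
    Continuous (interactionEnergy β p) := by
  have hpow : Continuous fun x : ι → ℝ => x ^ p :=
    continuous_pi fun j => (Real.continuous_rpow_const hp).comp (continuous_apply j)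
  exact hpow.dotProduct (continuous_const.matrix_mulVec hpow)

theorem interactionEnergy_single_one [DecidableEq ι] (β : Matrix ι ι ℝ) {p : ℝ} (hp : p ≠ 0)
    (i : ι) : interactionEnergy β p (Pi.single i 1) = β i i := by
  have hpow : (Pi.single i 1 : ι → ℝ) ^ p = Pi.single i 1 := by
    ext j
    rcases eq_or_ne j i with rfl | hj <;> simp [*, Real.zero_rpow hp]
  simp [interactionEnergy, hpow, mulVec_single]

theorem single_one_mem_nonnegUnitSphere [DecidableEq ι] (i : ι) :
    Pi.single i 1 ∈ nonnegUnitSphere ι :=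
  ⟨Pi.single_nonneg.2 zero_le_one, by simp⟩

theorem isCompact_nonnegUnitSphere : IsCompact (nonnegUnitSphere ι) := by
  have hclosed : IsClosed (nonnegUnitSphere ι) :=
    (isClosed_le continuous_const continuous_id).inter
      (isClosed_eq (continuous_id.dotProduct continuous_id) continuous_const)
  refine (isCompact_Icc (a := 0) (b := 1)).of_isClosed_subset hclosed
    fun x ⟨hx0, hx1⟩ => ⟨hx0, fun j => ?_⟩
  have hsq : x j * x j ≤ 1 :=
    hx1 ▸ single_le_sum (f := fun k => x k * x k) (fun k _ => mul_self_nonneg (x k)) (mem_univ j)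
  show x j ≤ 1
  nlinarith [hx0 j]

theorem interactionEnergy_le_of_isMaxOn {β : Matrix ι ι ℝ} {p : ℝ} (hp : 0 < p) {d : ι → ℝ}
    (hd : IsMaxOn (interactionEnergy β p) (nonnegUnitSphere ι) d) {x : ι → ℝ} (hx : 0 ≤ x) :
    interactionEnergy β p x ≤ interactionEnergy β p d * (x ⬝ᵥ x) ^ p := by
  rcases eq_or_ne x 0 with rfl | hne
  · have hzero : (0 : ι → ℝ) ^ p = 0 := by
      ext j
      simp [Real.zero_rpow hp.ne']
    simp [interactionEnergy, hzero, Real.zero_rpow hp.ne']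
  set t := √(x ⬝ᵥ x)
  have hpos : 0 < x ⬝ᵥ x :=
    (dotProduct_nonneg_of_nonneg hx hx).lt_of_ne (Ne.symm (dotProduct_self_eq_zero.not.2 hne))
  have ht : 0 < t := Real.sqrt_pos.2 hpos
  have hy : t⁻¹ • x ∈ nonnegUnitSphere ι := by
    refine ⟨smul_nonneg (inv_nonneg.2 ht.le) hx, ?_⟩
    rw [smul_dotProduct, dotProduct_smul, smul_eq_mul, smul_eq_mul, ← mul_assoc, ← sq, inv_pow,
      Real.sq_sqrt hpos.le, inv_mul_cancel₀ hpos.ne']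
  calc interactionEnergy β p x = (t ^ 2) ^ p * interactionEnergy β p (t⁻¹ • x) := by
        rw [← interactionEnergy_smul β p ht.le (smul_nonneg (inv_nonneg.2 ht.le) hx), smul_smul,
          mul_inv_cancel₀ ht.ne', one_smul]
    _ ≤ (t ^ 2) ^ p * interactionEnergy β p d := by gcongr; exact hd hy
    _ = _ := by rw [Real.sq_sqrt hpos.le, mul_comm]

theorem update_dotProduct_update [DecidableEq ι] (x : ι → ℝ) (i : ι) (t : ℝ) :
    update x i t ⬝ᵥ update x i t = x ⬝ᵥ x + 2 * (t - x i) * x i + (t - x i) ^ 2 := by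
  simpa using isSymm_one.update_dotProduct_mulVec_update x i t

theorem interactionEnergy_update [DecidableEq ι] {β : Matrix ι ι ℝ} (hβ : β.IsSymm) (p : ℝ)
    (x : ι → ℝ) (i : ι) (t : ℝ) :
    interactionEnergy β p (update x i t) = interactionEnergy β p x
      + 2 * (t ^ p - x i ^ p) * (β *ᵥ x ^ p) i + (t ^ p - x i ^ p) ^ 2 * β i i := by
  have hpow : update x i t ^ p = update (x ^ p) i (t ^ p) := by
    ext j
    simp only [Pi.pow_apply]
    exact apply_update (fun _ s => s ^ p) x i t j
  rw [interactionEnergy, hpow, hβ.update_dotProduct_mulVec_update]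
  rfl

theorem mulVec_rpow_apply_eq_of_pos [DecidableEq ι] {β : Matrix ι ι ℝ} (hβ : β.IsSymm) {p : ℝ}
    (hp : p ≠ 0) {d : ι → ℝ} (hd0 : 0 ≤ d) (hd1 : d ⬝ᵥ d = 1)
    (hmax : ∀ x, 0 ≤ x → interactionEnergy β p x ≤ interactionEnergy β p d * (x ⬝ᵥ x) ^ p)
    {i : ι} (hi : 0 < d i) : (β *ᵥ d ^ p) i = interactionEnergy β p d * d i ^ (2 - p) := by
  set s := d i
  set a := (β *ᵥ d ^ p) i
  set M := interactionEnergy β p d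
  let g : ℝ → ℝ := fun t => M + 2 * (t ^ p - s ^ p) * a + (t ^ p - s ^ p) ^ 2 * β i i
    - M * (1 + 2 * (t - s) * s + (t - s) ^ 2) ^ p
  have hloc : IsLocalMax g s := by
    filter_upwards [Ioi_mem_nhds hi] with t ht
    have h := hmax (update d i t) (le_update_iff.2 ⟨le_of_lt ht, fun j _ => hd0 j⟩)
    rw [interactionEnergy_update hβ, update_dotProduct_update, hd1] at h
    simp only [g, sub_self]
    norm_num
    linarith
  have hpow : HasDerivAt (fun t : ℝ => t ^ p) (p * s ^ (p - 1)) s :=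
    Real.hasDerivAt_rpow_const (Or.inl hi.ne')
  have hE : HasDerivAt (fun t => M + 2 * (t ^ p - s ^ p) * a + (t ^ p - s ^ p) ^ 2 * β i i)
      (2 * (p * s ^ (p - 1)) * a) s :=
    ((((hpow.sub_const (s ^ p)).const_mul 2).mul_const a).const_add M).add
      (((hpow.sub_const (s ^ p)).fun_pow 2).mul_const (β i i)) |>.congr_deriv (by simp)
  have hN : HasDerivAt (fun t => (1 + 2 * (t - s) * s + (t - s) ^ 2) ^ p) (p * (2 * s)) s := by
    have hin : HasDerivAt (fun t => 1 + 2 * (t - s) * s + (t - s) ^ 2) (2 * s) s :=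
      (((((hasDerivAt_id' s).sub_const s).const_mul 2).mul_const s).const_add 1).add
        (((hasDerivAt_id' s).sub_const s).fun_pow 2) |>.congr_deriv (by simp)
    exact hin.rpow_const (p := p) (Or.inl (by simp)) |>.congr_deriv (by simp; ring)
  have hcrit := hloc.hasDerivAt_eq_zero (hE.sub (hN.const_mul M))
  have hspos : 0 < s ^ (p - 1) := Real.rpow_pos_of_pos hi _
  have hss : s ^ (2 - p) * s ^ (p - 1) = s := by
    rw [← Real.rpow_add hi]
    norm_num
  refine mul_right_cancel₀ hspos.ne' ?_
  rw [mul_assoc, hss]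
  apply mul_left_cancel₀ (mul_ne_zero two_ne_zero hp)
  linear_combination hcrit

theorem mulVec_rpow_apply_eq_zero_of_eq_zero [DecidableEq ι] {β : Matrix ι ι ℝ} (hβ : β.IsSymm)
    (hβ0 : ∀ i j, 0 ≤ β i j) {p : ℝ} (hp0 : 0 < p) (hp2 : p < 2) {d : ι → ℝ} (hd0 : 0 ≤ d)
    (hd1 : d ⬝ᵥ d = 1)
    (hmax : ∀ x, 0 ≤ x → interactionEnergy β p x ≤ interactionEnergy β p d * (x ⬝ᵥ x) ^ p)
    {i : ι} (hi : d i = 0) : (β *ᵥ d ^ p) i = 0 := by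
  set a := (β *ᵥ d ^ p) i
  set M := interactionEnergy β p d
  have hdp : 0 ≤ d ^ p := fun j => Real.rpow_nonneg (hd0 j) p
  have hmulVec : 0 ≤ β *ᵥ d ^ p := fun j => dotProduct_nonneg_of_nonneg (hβ0 j) hdp
  have hM : 0 ≤ M := dotProduct_nonneg_of_nonneg hdp hmulVec
  have hbound : ∀ ε ∈ Set.Ioo (0 : ℝ) 1, 2 * a ≤ 3 * M * ε ^ (2 - p) := by
    rintro ε ⟨hε0, hε1⟩
    have h := hmax (update d i ε) (le_update_iff.2 ⟨hε0.le, fun j _ => hd0 j⟩)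
    rw [interactionEnergy_update hβ, update_dotProduct_update, hd1, hi,
      Real.zero_rpow hp0.ne'] at h
    simp only [sub_zero, mul_zero, add_zero] at h
    have hgrowth : (1 + ε ^ 2) ^ p ≤ 1 + 3 * ε ^ 2 :=
      calc (1 + ε ^ 2) ^ p ≤ (1 + ε ^ 2) ^ (2 : ℝ) :=
            Real.rpow_le_rpow_of_exponent_le (by nlinarith) hp2.le
        _ ≤ 1 + 3 * ε ^ 2 := by
          rw [Real.rpow_two]
          have hε2 : ε ^ 2 ≤ 1 := pow_le_one₀ hε0.le hε1.le
          nlinarith [mul_le_mul_of_nonneg_left hε2 (sq_nonneg ε)]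
    have hsplit : ε ^ 2 = ε ^ p * ε ^ (2 - p) := by
      rw [← Real.rpow_add hε0, add_sub_cancel, Real.rpow_two]
    have hεp : 0 < ε ^ p := Real.rpow_pos_of_pos hε0 p
    have hgain : ε ^ p * (2 * a) ≤ 3 * M * ε ^ 2 := by
      nlinarith [mul_le_mul_of_nonneg_left hgrowth hM, mul_nonneg (sq_nonneg (ε ^ p)) (hβ0 i i)]
    refine le_of_mul_le_mul_left ?_ hεp
    linear_combination hgain + 3 * M * hsplit
  have hlim : Tendsto (fun ε : ℝ => 3 * M * ε ^ (2 - p)) (𝓝[>] 0) (𝓝 0) := by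
    have hcont : ContinuousAt (fun ε : ℝ => 3 * M * ε ^ (2 - p)) 0 :=
      continuousAt_const.mul (Real.continuousAt_rpow_const 0 _ (Or.inr (by linarith)))
    simpa [Real.zero_rpow (sub_pos.2 hp2).ne'] using hcont.tendsto.mono_left nhdsWithin_le_nhds
  have ha : 2 * a ≤ 0 := ge_of_tendsto hlim (eventually_of_mem (Ioo_mem_nhdsGT one_pos) hbound)
  exact le_antisymm (by linarith) (hmulVec i)

theorem mulVec_rpow_eq_of_isMaxOn [DecidableEq ι] {β : Matrix ι ι ℝ} (hβ : β.IsSymm)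
    (hβ0 : ∀ i j, 0 ≤ β i j) {p : ℝ} (hp0 : 0 < p) (hp2 : p < 2) {d : ι → ℝ}
    (hd : d ∈ nonnegUnitSphere ι) (hmax : IsMaxOn (interactionEnergy β p) (nonnegUnitSphere ι) d) :
    β *ᵥ d ^ p = interactionEnergy β p d • d ^ (2 - p) := by
  have hbound x (hx : 0 ≤ x) := interactionEnergy_le_of_isMaxOn hp0 hmax hx
  ext i
  by_cases hi : d i = 0
  · rw [mulVec_rpow_apply_eq_zero_of_eq_zero hβ hβ0 hp0 hp2 hd.1 hd.2 hbound hi, Pi.smul_apply,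
      Pi.pow_apply, hi, Real.zero_rpow (by linarith), smul_zero]
  · exact mulVec_rpow_apply_eq_of_pos hβ hp0.ne' hd.1 hd.2 hbound ((hd.1 i).lt_of_ne' hi)

end Interaction

section Solutions

variable {ι : Type*} [Fintype ι]

theorem mulVec_rpow_eq_of_eq_smul {β : Matrix ι ι ℝ} {p q M : ℝ} (hpq : p ≠ q) (hM : 0 < M)
    {d : ι → ℝ} (hd : 0 ≤ d) (h : β *ᵥ d ^ p = M • d ^ q) :
    β *ᵥ (M ^ (q - p)⁻¹ • d) ^ p = (M ^ (q - p)⁻¹ • d) ^ q := by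
  set t := M ^ (q - p)⁻¹
  have ht : 0 < t := Real.rpow_pos_of_pos hM _
  have htq : t ^ q = t ^ p * M := by
    have hgap : t ^ (q - p) = M := by
      rw [← Real.rpow_mul hM.le, inv_mul_cancel₀ (sub_ne_zero.2 hpq.symm), Real.rpow_one]
    rw [← hgap, ← Real.rpow_add ht, add_sub_cancel]
  rw [smul_rpow_of_nonneg ht.le hd, smul_rpow_of_nonneg ht.le hd, mulVec_smul, h, smul_smul, htq]

theorem exists_nonneg_ne_zero_mulVec_rpow_eq {β : Matrix ι ι ℝ} (hβ : β.IsSymm)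
    (hβ0 : ∀ i j, 0 ≤ β i j) {i : ι} (hi : 0 < β i i) {p : ℝ} (hp1 : 1 < p) (hp2 : p < 2) :
    ∃ c : ι → ℝ, 0 ≤ c ∧ c ≠ 0 ∧ β *ᵥ c ^ p = c ^ (2 - p) := by
  classical
  obtain ⟨d, hd, hmax⟩ := isCompact_nonnegUnitSphere.exists_isMaxOn
    ⟨_, single_one_mem_nonnegUnitSphere i⟩
    (continuous_interactionEnergy β (by linarith)).continuousOn
  set M := interactionEnergy β p d
  have hM : 0 < M := by
    have h : interactionEnergy β p (Pi.single i 1) ≤ M := hmax (single_one_mem_nonnegUnitSphere i)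
    rw [interactionEnergy_single_one β (by linarith)] at h
    exact hi.trans_le h
  have hd0 : d ≠ 0 := by
    rintro rfl
    simpa using hd.2
  exact ⟨_, smul_nonneg (Real.rpow_nonneg hM.le _) hd.1,
    smul_ne_zero (Real.rpow_pos_of_pos hM _).ne' hd0,
    mulVec_rpow_eq_of_eq_smul (by linarith) hM hd.1
      (mulVec_rpow_eq_of_isMaxOn hβ hβ0 (by linarith) hp2 hd hmax)⟩

theorem apply_eq_zero_of_mulVec_rpow_eq {β : Matrix ι ι ℝ} (hβ0 : ∀ i j, 0 ≤ β i j) {p q : ℝ}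
    (hq : q ≠ 0) {c : ι → ℝ} (hc0 : 0 ≤ c) (hc : β *ᵥ c ^ p = c ^ q) {i j : ι} (hi : c i = 0)
    (hj : 0 < c j) : β i j = 0 := by
  have hrow : ∑ k, β i k * c k ^ p = 0 := by
    simpa [mulVec, dotProduct, hi, Real.zero_rpow hq] using congrFun hc i
  have hterm := (sum_eq_zero_iff_of_nonneg fun k _ =>
    mul_nonneg (hβ0 i k) (Real.rpow_nonneg (hc0 k) p)).1 hrow j (mem_univ j)
  exact (mul_eq_zero.1 hterm).resolve_right (Real.rpow_pos_of_pos hj p).ne'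

theorem exists_pos_mulVec_rpow_eq_of_zeros {β : Matrix ι ι ℝ} (hβ : β.IsSymm)
    (hβ0 : ∀ i j, 0 ≤ β i j) {p q : ℝ} (hp : p ≠ 0) (hq : q ≠ 0) {c : ι → ℝ} (hc0 : 0 ≤ c)
    (hc : β *ᵥ c ^ p = c ^ q) {z : {i // c i = 0} → ℝ} (hz0 : ∀ i, 0 < z i)
    (hz : β.submatrix Subtype.val Subtype.val *ᵥ z ^ p = z ^ q) :
    ∃ c' : ι → ℝ, (∀ i, 0 < c' i) ∧ β *ᵥ c' ^ p = c' ^ q := by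
  classical
  let c' : ι → ℝ := fun i => if h : c i = 0 then z ⟨i, h⟩ else c i
  have hcross : ∀ i j, c i = 0 → c j ≠ 0 → β i j = 0 := fun i j hi hj =>
    apply_eq_zero_of_mulVec_rpow_eq hβ0 hq hc0 hc hi ((hc0 j).lt_of_ne' hj)
  have hsplit (v : ι → ℝ) (i : ι) : (β *ᵥ v) i
      = ∑ j : {j // c j = 0}, β i j * v j + ∑ j : {j // c j ≠ 0}, β i j * v j :=
    (Fintype.sum_subtype_add_sum_subtype (fun j => c j = 0) (fun j => β i j * v j)).symm
  refine ⟨c', fun i => ?_, funext fun i => ?_⟩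
  · by_cases h : c i = 0
    · simpa [c', h] using hz0 ⟨i, h⟩
    · simpa [c', h] using (hc0 i).lt_of_ne' h
  · rw [hsplit]
    by_cases hi : c i = 0
    · have hS : ∑ j : {j // c j ≠ 0}, β i j * (c' ^ p) j = 0 :=
        sum_eq_zero fun j _ => by rw [hcross i j hi j.2, zero_mul]
      have hZ : ∑ j : {j // c j = 0}, β i j * (c' ^ p) j
          = (β.submatrix Subtype.val Subtype.val *ᵥ z ^ p) (⟨i, hi⟩ : {j // c j = 0}) :=
        sum_congr rfl fun j _ => by simp [c', j.2]
      rw [hS, hZ, add_zero, hz]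
      simp [c', hi]
    · have hZ : ∑ j : {j // c j = 0}, β i j * (c' ^ p) j = 0 :=
        sum_eq_zero fun j _ => by rw [← hβ.apply, hcross j i j.2 hi, zero_mul]
      have hS : ∑ j : {j // c j ≠ 0}, β i j * (c' ^ p) j = (β *ᵥ c ^ p) i := by
        have hZc : ∑ j : {j // c j = 0}, β i j * (c ^ p) j = 0 :=
          sum_eq_zero fun j _ => by simp [j.2, Real.zero_rpow hp]
        rw [hsplit, hZc, zero_add]
        exact sum_congr rfl fun j _ => by simp [c', j.2]
      rw [hZ, hS, zero_add, hc]
      simp [c', hi]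

theorem exists_pos_mulVec_rpow_eq {β : Matrix ι ι ℝ} (hβ : β.IsSymm) (hβ0 : ∀ i j, 0 ≤ β i j)
    (hdiag : ∀ i, 0 < β i i) {p : ℝ} (hp1 : 1 < p) (hp2 : p < 2) :
    ∃ c : ι → ℝ, (∀ i, 0 < c i) ∧ β *ᵥ c ^ p = c ^ (2 - p) := by
  induction hn : Fintype.card ι using Nat.strong_induction_on generalizing ι with
  | _ n ih =>
  rcases isEmpty_or_nonempty ι with hι | hι
  · exact ⟨0, isEmptyElim, Subsingleton.elim _ _⟩
  obtain ⟨i⟩ := hι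
  obtain ⟨c, hc0, hne, hc⟩ := exists_nonneg_ne_zero_mulVec_rpow_eq hβ hβ0 (hdiag i) hp1 hp2
  obtain ⟨j, hj⟩ := Function.ne_iff.1 hne
  obtain ⟨z, hz0, hz⟩ := ih _ (hn ▸ Fintype.card_subtype_lt (p := fun k => c k = 0) hj)
    (hβ.submatrix _) (fun _ _ => hβ0 _ _) (fun _ => hdiag _) rfl
  exact exists_pos_mulVec_rpow_eq_of_zeros hβ hβ0 (by linarith) (by linarith) hc0 hc hz0 hz

end Solutions

theorem stmt3_general (l : ℕ) (p : ℝ) (hp1 : 1 < p) (hp2 : p < 2)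
    (β : Fin l → Fin l → ℝ)
    (hsym : ∀ i j, β i j = β j i)
    (hdiag : ∀ i, 0 < β i i)
    (hoff : ∀ i j, i ≠ j → 0 ≤ β i j) :
    ∃ c : Fin l → ℝ, (∀ i, 0 < c i) ∧
      ∀ i, c i = ∑ j, β i j * |c j| ^ p * |c i| ^ (p - 2) * c i := by
  have hβ0 (i j : Fin l) : 0 ≤ β i j := by
    rcases eq_or_ne i j with rfl | hij
    exacts [(hdiag i).le, hoff i j hij]
  obtain ⟨c, hc0, hc⟩ :=
    exists_pos_mulVec_rpow_eq (β := β) (IsSymm.ext fun i j => hsym j i) hβ0 hdiag hp1 hp2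
  refine ⟨c, hc0, fun i => ?_⟩
  have hrow : ∑ j, β i j * c j ^ p = c i ^ (2 - p) := congrFun hc i
  calc c i = c i ^ (2 - p) * c i ^ (p - 2) * c i := by
        rw [← Real.rpow_add (hc0 i), sub_add_sub_cancel', sub_self, Real.rpow_zero, one_mul]
    _ = ∑ j, β i j * |c j| ^ p * |c i| ^ (p - 2) * c i := by
        simp only [abs_of_pos (hc0 _), ← hrow, sum_mul]

/-- For `1 < p < 2` and a purely cooperative symmetric matrix `(β_{ij})`, the algebraic
system `c_i = ∑_j β_{ij}|c_j|^p |c_i|^{p-2} c_i` has a solution with all components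
positive (in particular, all nonzero). -/
theorem stmt3 (l : ℕ) (hl : 1 ≤ l) (p : ℝ) (hp1 : 1 < p) (hp2 : p < 2)
    (β : Fin l → Fin l → ℝ)
    (hsym : ∀ i j, β i j = β j i)
    (hdiag : ∀ i, 0 < β i i)
    (hoff : ∀ i j, i ≠ j → 0 ≤ β i j) :
    ∃ c : Fin l → ℝ, (∀ i, 0 < c i) ∧
      ∀ i, c i = ∑ j, β i j * |c j| ^ p * |c i| ^ (p - 2) * c i :=
  stmt3_general l p hp1 hp2 β hsym hdiag hoff
end

section
/- Let q ≥ 1, p > 1, and let a_h > 0, b_h > 0 and d_{hk} = d_{kh} ≥ 0 (h ≠ k) be real numbers. Define J : (0,∞)^q → ℝ by J(s) = Σ_h a_h s_h² − Σ_h b_h s_h^{2p} + Σ_{h≠k} d_{hk} s_h^p s_k^p. If s* ∈ (0,∞)^q is a critical point of J, then s* is the unique critical point of J in (0,∞)^q and J(s*) = max_{s ∈ (0,∞)^q} J(s). -/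
open Finset

/-!
Fix a positive critical point `s₀` and put `w_h = s₀_h ^ p`. The weighted AM–GM inequality
`2 x_h x_k ≤ x_h² w_k / w_h + x_k² w_h / w_k` bounds the nonnegative interaction term by a
diagonal one, so `J s ≤ ∑_h (a_h s_h² - c_h s_h^{2p})` with equality at `s₀`, where
`c_h = b_h - (∑_{k ≠ h} d_{hk} w_k) / w_h`. The critical-point equations read
`a_h s₀_h² = p c_h s₀_h^{2p}`; they force `c_h > 0` and, by strict convexity of `u ↦ u ^ p` in
`u = s_h²`, make `s₀_h` the strict maximiser of the `h`-th decoupled summand. Hence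
`J s < J s₀` for `s ≠ s₀`, and comparing two critical points both ways gives uniqueness.
-/

lemma rpow_two_mul {x : ℝ} (hx : 0 ≤ x) (p : ℝ) : x ^ (2 * p) = (x ^ p) ^ 2 := by
  rw [mul_comm, ← Real.rpow_mul_natCast hx]
  norm_num

lemma rpow_tangent_lt {p u u₀ : ℝ} (hp : 1 < p) (hu : 0 ≤ u) (hu₀ : 0 < u₀) (hne : u ≠ u₀) :
    u₀ ^ p + p * u₀ ^ (p - 1) * (u - u₀) < u ^ p := by
  have hz : -1 ≤ u / u₀ - 1 := by linarith [div_nonneg hu hu₀.le]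
  have hz' : u / u₀ - 1 ≠ 0 := by
    rwa [sub_ne_zero, ne_eq, div_eq_one_iff_eq hu₀.ne']
  have bernoulli := one_add_mul_self_lt_rpow_one_add hz hz' hp
  rw [add_sub_cancel, Real.div_rpow hu hu₀.le, lt_div_iff₀ (by positivity)] at bernoulli
  rw [Real.rpow_sub_one hu₀.ne']
  refine lt_of_eq_of_lt ?_ bernoulli
  field_simp

lemma mul_sq_sub_mul_rpow_sq_lt {p a c t t₀ : ℝ} (hp : 1 < p) (hc : 0 < c) (ht : 0 ≤ t)
    (ht₀ : 0 < t₀) (hne : t ≠ t₀) (hbal : a * t₀ ^ 2 = p * c * (t₀ ^ p) ^ 2) :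
    a * t ^ 2 - c * (t ^ p) ^ 2 < a * t₀ ^ 2 - c * (t₀ ^ p) ^ 2 := by
  have rpow_sq : ∀ x : ℝ, 0 ≤ x → (x ^ p) ^ 2 = (x ^ 2) ^ p := fun x hx => by
    rw [← Real.rpow_mul_natCast hx, ← Real.rpow_natCast, ← Real.rpow_mul hx, mul_comm]
  rw [rpow_sq t₀ ht₀.le] at hbal
  rw [rpow_sq t ht, rpow_sq t₀ ht₀.le]
  have hu₀ : 0 < t₀ ^ 2 := by positivity
  have ha : a = p * c * (t₀ ^ 2) ^ (p - 1) := by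
    rw [Real.rpow_sub_one hu₀.ne']
    field_simp
    linear_combination hbal
  have tangent := rpow_tangent_lt hp (sq_nonneg t) hu₀
    fun h => hne ((pow_left_inj₀ ht ht₀.le two_ne_zero).mp h)
  rw [ha]
  linear_combination c * tangent

noncomputable section

variable {ι : Type*} [DecidableEq ι]

lemma hasDerivAt_update_apply {f : ℝ → ℝ} {f' : ℝ} (s : ι → ℝ) (h k : ι)
    (hf : HasDerivAt f f' (s h)) :
    HasDerivAt (fun t => f (Function.update s h t k)) (if k = h then f' else 0) (s h) := by
  by_cases hk : k = h
  · subst hk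
    simpa using hf
  · simpa [Function.update_of_ne hk, hk] using hasDerivAt_const (s h) (f (s k))

variable [Fintype ι]

lemma hasDerivAt_sum_update {f : ι → ℝ → ℝ} {f' : ℝ} (s : ι → ℝ) (h : ι)
    (hf : HasDerivAt (f h) f' (s h)) :
    HasDerivAt (fun t => ∑ k, f k (Function.update s h t k)) f' (s h) := by
  have split : (fun t => ∑ k, f k (Function.update s h t k))
      = fun t => f h t + ∑ k ∈ univ.erase h, f k (s k) := by
    funext t
    rw [← add_sum_erase _ _ (mem_univ h), Function.update_self]
    congr 1
    exact sum_congr rfl fun k hk => by rw [Function.update_of_ne (ne_of_mem_erase hk)]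
  rw [split]
  exact hf.add_const _

lemma hasDerivAt_sum_sum_erase_update {f : ℝ → ℝ} {f' : ℝ} (d : ι → ι → ℝ) (s : ι → ℝ) (h : ι)
    (hf : HasDerivAt f f' (s h)) :
    HasDerivAt
      (fun t => ∑ i, ∑ k ∈ univ.erase i,
        d i k * f (Function.update s h t i) * f (Function.update s h t k))
      (f' * ∑ k ∈ univ.erase h, (d h k + d k h) * f (s k)) (s h) := by
  have hterm := fun i k => ((hasDerivAt_update_apply s h i hf).const_mul (d i k)).fun_mul
    (hasDerivAt_update_apply s h k hf)
  refine (HasDerivAt.fun_sum (u := univ) fun i _ =>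
    HasDerivAt.fun_sum (u := univ.erase i) fun k _ => hterm i k).congr_deriv ?_
  simp only [Function.update_eq_self, mul_ite, ite_mul, mul_zero, zero_mul, sum_add_distrib]
  simp only [sum_ite_irrel, sum_const_zero, sum_ite_eq', mem_univ, if_true]
  rw [← sum_filter]
  simp only [mem_erase, ne_comm (a := h), mem_univ, and_true, filter_ne', mul_sum,
    ← sum_add_distrib]
  exact sum_congr rfl fun k _ => by ring

lemma sum_sum_erase_comm {M : Type*} [AddCommMonoid M] (F : ι → ι → M) :
    ∑ h, ∑ k ∈ univ.erase h, F h k = ∑ h, ∑ k ∈ univ.erase h, F k h :=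
  sum_comm' fun h k => by simp only [mem_univ, mem_erase, true_and, and_true, ne_comm]

lemma sum_sum_erase_mul_mul_le {d : ι → ι → ℝ} (hsymm : ∀ h k, d h k = d k h)
    (hd : ∀ h k, h ≠ k → 0 ≤ d h k) {w : ι → ℝ} (hw : ∀ h, 0 < w h) (x : ι → ℝ) :
    ∑ h, ∑ k ∈ univ.erase h, d h k * x h * x k
      ≤ ∑ h, x h ^ 2 / w h * ∑ k ∈ univ.erase h, d h k * w k := by
  have amgm : ∀ h k, h ≠ k → d h k * x h * x k
      ≤ d h k * (x h ^ 2 * w k / w h) / 2 + d h k * (x k ^ 2 * w h / w k) / 2 := by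
    intro h k hhk
    have hw' := mul_pos (hw h) (hw k)
    have : x h * x k ≤ (x h ^ 2 * w k / w h + x k ^ 2 * w h / w k) / 2 := by
      rw [div_add_div _ _ (hw h).ne' (hw k).ne', le_div_iff₀ two_pos, le_div_iff₀ (by positivity)]
      nlinarith [sq_nonneg (x h * w k - x k * w h)]
    nlinarith [hd h k hhk]
  calc ∑ h, ∑ k ∈ univ.erase h, d h k * x h * x k
      ≤ ∑ h, ∑ k ∈ univ.erase h,
          (d h k * (x h ^ 2 * w k / w h) / 2 + d h k * (x k ^ 2 * w h / w k) / 2) :=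
        sum_le_sum fun h _ => sum_le_sum fun k hk => amgm h k (ne_of_mem_erase hk).symm
    _ = ∑ h, ∑ k ∈ univ.erase h, d h k * (x h ^ 2 * w k / w h) := by
        simp only [sum_add_distrib]
        rw [sum_sum_erase_comm (fun h k => d h k * (x k ^ 2 * w h / w k) / 2)]
        simp only [hsymm _ _, ← sum_add_distrib, add_halves]
    _ = ∑ h, x h ^ 2 / w h * ∑ k ∈ univ.erase h, d h k * w k := by
        simp only [mul_sum]
        exact sum_congr rfl fun h _ => sum_congr rfl fun k _ => by ring

def fiberingMap (p : ℝ) (a b : ι → ℝ) (d : ι → ι → ℝ) (s : ι → ℝ) : ℝ :=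
  ∑ h, a h * s h ^ 2 - ∑ h, b h * s h ^ (2 * p)
    + ∑ h, ∑ k ∈ univ.erase h, d h k * s h ^ p * s k ^ p

def coupling (p : ℝ) (d : ι → ι → ℝ) (s : ι → ℝ) (h : ι) : ℝ :=
  ∑ k ∈ univ.erase h, d h k * s k ^ p

variable {p : ℝ} {a b : ι → ℝ} {d : ι → ι → ℝ}

lemma mul_sq_eq_of_deriv_update_eq_zero (hp : 1 < p) (hsymm : ∀ h k, d h k = d k h)
    {s : ι → ℝ} {h : ι} (hs : 0 < s h)
    (hcrit : deriv (fun t => fiberingMap p a b d (Function.update s h t)) (s h) = 0) :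
    a h * s h ^ 2 = p * s h ^ p * (b h * s h ^ p - coupling p d s h) := by
  have hquad := hasDerivAt_sum_update (f := fun k x => a k * x ^ 2) s h
    ((hasDerivAt_pow 2 (s h)).const_mul (a h))
  have hpow := hasDerivAt_sum_update (f := fun k x => b k * x ^ (2 * p)) s h
    ((Real.hasDerivAt_rpow_const (Or.inr (by linarith))).const_mul (b h))
  have hcross := hasDerivAt_sum_sum_erase_update d s h
    (Real.hasDerivAt_rpow_const (Or.inr hp.le))
  have hderiv : HasDerivAt (fun t => fiberingMap p a b d (Function.update s h t)) _ (s h) :=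
    (hquad.fun_sub hpow).fun_add hcross
  have hsum : ∑ k ∈ univ.erase h, (d h k + d k h) * s k ^ p = 2 * coupling p d s h := by
    rw [coupling, mul_sum]
    exact sum_congr rfl fun k _ => by rw [hsymm k h]; ring
  rw [hderiv.deriv, hsum, Real.rpow_sub_one hs.ne', Real.rpow_sub_one hs.ne',
    rpow_two_mul hs.le] at hcrit
  field_simp at hcrit
  linear_combination hcrit / 2

lemma fiberingMap_le_sum (hsymm : ∀ h k, d h k = d k h) (hd : ∀ h k, h ≠ k → 0 ≤ d h k)
    {s₀ s : ι → ℝ} (hs₀ : ∀ h, 0 < s₀ h) (hs : ∀ h, 0 ≤ s h) :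
    fiberingMap p a b d s
      ≤ ∑ h, (a h * s h ^ 2 - (b h - coupling p d s₀ h / s₀ h ^ p) * (s h ^ p) ^ 2) := by
  have amgm := sum_sum_erase_mul_mul_le hsymm hd (fun h => Real.rpow_pos_of_pos (hs₀ h) p)
    (fun h => s h ^ p)
  have hrhs : ∑ h, (a h * s h ^ 2 - (b h - coupling p d s₀ h / s₀ h ^ p) * (s h ^ p) ^ 2)
      = ∑ h, a h * s h ^ 2 - ∑ h, b h * (s h ^ p) ^ 2
        + ∑ h, (s h ^ p) ^ 2 / s₀ h ^ p * coupling p d s₀ h := by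
    rw [← sum_sub_distrib, ← sum_add_distrib]
    exact sum_congr rfl fun h _ => by ring
  rw [hrhs, fiberingMap]
  simp only [rpow_two_mul (hs _), coupling]
  linarith

lemma fiberingMap_eq_sum {s₀ : ι → ℝ} (hs₀ : ∀ h, 0 < s₀ h) :
    fiberingMap p a b d s₀
      = ∑ h, (a h * s₀ h ^ 2 - (b h - coupling p d s₀ h / s₀ h ^ p) * (s₀ h ^ p) ^ 2) := by
  rw [fiberingMap, ← sum_sub_distrib, ← sum_add_distrib]
  refine sum_congr rfl fun h _ => ?_
  have := (Real.rpow_pos_of_pos (hs₀ h) p).ne'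
  have hcross :
      ∑ k ∈ univ.erase h, d h k * s₀ h ^ p * s₀ k ^ p = s₀ h ^ p * coupling p d s₀ h := by
    rw [coupling, mul_sum]
    exact sum_congr rfl fun k _ => by ring
  rw [rpow_two_mul (hs₀ h).le, hcross]
  field_simp
  ring

lemma fiberingMap_lt_of_mul_sq_eq (hp : 1 < p) (ha : ∀ h, 0 < a h)
    (hsymm : ∀ h k, d h k = d k h) (hd : ∀ h k, h ≠ k → 0 ≤ d h k)
    {s₀ : ι → ℝ} (hs₀ : ∀ h, 0 < s₀ h)
    (hbal : ∀ h, a h * s₀ h ^ 2 = p * s₀ h ^ p * (b h * s₀ h ^ p - coupling p d s₀ h))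
    {s : ι → ℝ} (hs : ∀ h, 0 < s h) (hne : s ≠ s₀) :
    fiberingMap p a b d s < fiberingMap p a b d s₀ := by
  set c := fun h => b h - coupling p d s₀ h / s₀ h ^ p
  have hw : ∀ h, 0 < s₀ h ^ p := fun h => Real.rpow_pos_of_pos (hs₀ h) p
  have hbal' : ∀ h, a h * s₀ h ^ 2 = p * c h * (s₀ h ^ p) ^ 2 := fun h => by
    have := (hw h).ne'
    rw [hbal]
    simp only [c]
    field_simp
  have hc : ∀ h, 0 < c h := fun h => by
    have hpos := hbal' h ▸ mul_pos (ha h) (pow_pos (hs₀ h) 2)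
    rw [mul_pos_iff_of_pos_right (pow_pos (hw h) 2), mul_pos_iff_of_pos_left (by linarith)] at hpos
    exact hpos
  have hlt : ∀ h, s h ≠ s₀ h →
      a h * s h ^ 2 - c h * (s h ^ p) ^ 2 < a h * s₀ h ^ 2 - c h * (s₀ h ^ p) ^ 2 :=
    fun h hne => mul_sq_sub_mul_rpow_sq_lt hp (hc h) (hs h).le (hs₀ h) hne (hbal' h)
  obtain ⟨h₀, hh₀⟩ := Function.ne_iff.mp hne
  calc fiberingMap p a b d s ≤ ∑ h, (a h * s h ^ 2 - c h * (s h ^ p) ^ 2) :=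
        fiberingMap_le_sum hsymm hd hs₀ fun h => (hs h).le
    _ < ∑ h, (a h * s₀ h ^ 2 - c h * (s₀ h ^ p) ^ 2) := by
        refine sum_lt_sum (fun h _ => ?_) ⟨h₀, mem_univ h₀, hlt h₀ hh₀⟩
        rcases eq_or_ne (s h) (s₀ h) with heq | hne
        · rw [heq]
        · exact (hlt h hne).le
    _ = fiberingMap p a b d s₀ := (fiberingMap_eq_sum hs₀).symm

end

theorem stmt6_general (q : ℕ) (p : ℝ) (hp : 1 < p)
    (a b : Fin q → ℝ) (d : Fin q → Fin q → ℝ)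
    (ha : ∀ h, 0 < a h)
    (hdsym : ∀ h k, d h k = d k h) (hd0 : ∀ h k, h ≠ k → 0 ≤ d h k)
    (J : (Fin q → ℝ) → ℝ)
    (hJ : ∀ s : Fin q → ℝ, J s =
      ∑ h, a h * s h ^ 2 - ∑ h, b h * s h ^ (2*p)
        + ∑ h, ∑ k ∈ Finset.univ.erase h, d h k * s h ^ p * s k ^ p)
    (s₀ : Fin q → ℝ) (hs₀ : ∀ h, 0 < s₀ h)
    (hcrit : ∀ h, deriv (fun t => J (Function.update s₀ h t)) (s₀ h) = 0) :
    (∀ s : Fin q → ℝ, (∀ h, 0 < s h) →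
      (∀ h, deriv (fun t => J (Function.update s h t)) (s h) = 0) → s = s₀) ∧
    (∀ s : Fin q → ℝ, (∀ h, 0 < s h) → J s ≤ J s₀) := by
  obtain rfl : J = fiberingMap p a b d := funext hJ
  have hlt : ∀ {s₁ s₂ : Fin q → ℝ}, (∀ h, 0 < s₁ h) → (∀ h, 0 < s₂ h) →
      (∀ h, deriv (fun t => fiberingMap p a b d (Function.update s₂ h t)) (s₂ h) = 0) →
      s₁ ≠ s₂ → fiberingMap p a b d s₁ < fiberingMap p a b d s₂ :=
    fun hs₁ hs₂ hcrit₂ => fiberingMap_lt_of_mul_sq_eq hp ha hdsym hd0 hs₂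
      (fun h => mul_sq_eq_of_deriv_update_eq_zero hp hdsym (hs₂ h) (hcrit₂ h)) hs₁
  refine ⟨fun s hs hcrit' => ?_, fun s hs => ?_⟩
  · by_contra hne
    exact (hlt hs hs₀ hcrit hne).not_gt (hlt hs₀ hs hcrit' (Ne.symm hne))
  · rcases eq_or_ne s s₀ with rfl | hne
    · exact le_rfl
    · exact (hlt hs hs₀ hcrit hne).le

/-- Fibering-map lemma: for `J(s) = Σ a_h s_h² − Σ b_h s_h^{2p} + Σ_{h≠k} d_{hk} s_h^p s_k^p`
with `a_h, b_h > 0` and `d_{hk} = d_{kh} ≥ 0`, an interior critical point `s*` in `(0,∞)^q`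
is the unique critical point there and is a global maximum of `J` on `(0,∞)^q`. -/
theorem stmt6 (q : ℕ) (hq : 1 ≤ q) (p : ℝ) (hp : 1 < p)
    (a b : Fin q → ℝ) (d : Fin q → Fin q → ℝ)
    (ha : ∀ h, 0 < a h) (hb : ∀ h, 0 < b h)
    (hdsym : ∀ h k, d h k = d k h) (hd0 : ∀ h k, h ≠ k → 0 ≤ d h k)
    (J : (Fin q → ℝ) → ℝ)
    (hJ : ∀ s : Fin q → ℝ, J s =
      ∑ h, a h * s h ^ 2 - ∑ h, b h * s h ^ (2*p)
        + ∑ h, ∑ k ∈ Finset.univ.erase h, d h k * s h ^ p * s k ^ p)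
    (s₀ : Fin q → ℝ) (hs₀ : ∀ h, 0 < s₀ h)
    (hcrit : ∀ h, deriv (fun t => J (Function.update s₀ h t)) (s₀ h) = 0) :
    (∀ s : Fin q → ℝ, (∀ h, 0 < s h) →
      (∀ h, deriv (fun t => J (Function.update s h t)) (s h) = 0) → s = s₀) ∧
    (∀ s : Fin q → ℝ, (∀ h, 0 < s h) → J s ≤ J s₀) :=
  stmt6_general q p hp a b d ha hdsym hd0 J hJ s₀ hs₀ hcrit
end

section
/- Let p > 1 and a > 0, B > 0, C ∈ ℝ, and t(ε) = ((ε² + a)/(B ε^{2p} + 2C ε^p + a))^{1/(2p−2)}. If 1 < p < 2 and C > 0, then for all sufficiently small ε > 0 one has (1 − t(ε)²) a − t(ε)² ε² > 0; in fact (1 − t(ε)²)a − t(ε)²ε² = (2/(p−1)) C ε^p + o(ε^p) as ε → 0⁺. -/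
/-!
Write `r ε = (ε² + a) / (B ε^{2p} + 2C ε^p + a)`, so that `t² = r^q` with `q = 1/(p-1)` and the
gap equals `-ε² - (ε² + a)(r^q - 1)`. Because `p < 2`, both `ε²` and `ε^{2p}` are `o(ε^p)`,
hence `r - 1 ∼ -(2C/a) ε^p`; differentiability of `x ↦ x^q` at `1` gives `r^q - 1 ∼ q (r - 1)`.
Multiplying by `ε² + a ∼ a` yields the gap `∼ 2qC ε^p`, which is positive when `C > 0`.
-/

open Topology Filter Asymptotics

theorem tendsto_rpow_nhdsGT_zero {r : ℝ} (hr : 0 < r) :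
    Tendsto (fun x : ℝ => x ^ r) (𝓝[>] 0) (𝓝 0) :=
  (tendsto_id.mono_left nhdsWithin_le_nhds).rpow_const_nhds_zero hr

theorem isLittleO_rpow_rpow_nhdsGT_zero {r s : ℝ} (hrs : r < s) :
    (fun x : ℝ => x ^ s) =o[𝓝[>] 0] fun x => x ^ r := by
  have h := (isLittleO_one_iff ℝ).2 (tendsto_rpow_nhdsGT_zero (sub_pos.2 hrs)) |>.mul_isBigO
    (isBigO_refl (fun x : ℝ => x ^ r) _)
  refine h.congr' ?_ (by simp)
  filter_upwards [self_mem_nhdsWithin] with x hx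
  rw [← Real.rpow_add hx, sub_add_cancel]

theorem isEquivalent_rpow_sub_one {α : Type*} {l : Filter α} {q : ℝ} (hq : q ≠ 0)
    {r : α → ℝ} (hr : Tendsto r l (𝓝 1)) :
    (fun x => r x ^ q - 1) ~[l] fun x => q * (r x - 1) := by
  have h := (Real.hasDerivAt_rpow_const (x := 1) (p := q) (.inl one_ne_zero)).isLittleO
  simp only [Real.one_rpow, mul_one, smul_eq_mul] at h
  refine IsLittleO.isEquivalent ?_
  refine ((h.comp_tendsto hr).const_mul_right hq).congr_left fun x => ?_
  simp only [Function.comp, Pi.sub_apply]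
  ring

section EnergyGap

variable {p a B C : ℝ}

theorem isLittleO_sq_sub_rpow_two_mul (hp0 : 0 < p) (hp2 : p < 2) :
    (fun ε : ℝ => ε ^ 2 - B * ε ^ (2*p)) =o[𝓝[>] 0] fun ε => ε ^ p := by
  refine IsLittleO.sub ?_ ((isLittleO_rpow_rpow_nhdsGT_zero (by linarith)).const_mul_left B)
  simpa only [Real.rpow_two] using isLittleO_rpow_rpow_nhdsGT_zero hp2

theorem isEquivalent_ratio_sub_one (hp0 : 0 < p) (hp2 : p < 2) (ha : a ≠ 0) (hC : C ≠ 0) :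
    (fun ε : ℝ => (ε ^ 2 + a) / (B * ε ^ (2*p) + 2 * C * ε ^ p + a) - 1)
      ~[𝓝[>] 0] fun ε => -(2 * C / a) * ε ^ p := by
  have hD : Tendsto (fun ε : ℝ => B * ε ^ (2*p) + 2 * C * ε ^ p + a) (𝓝[>] 0) (𝓝 a) := by
    simpa using (((tendsto_rpow_nhdsGT_zero (by positivity : 0 < 2*p)).const_mul B).add
      ((tendsto_rpow_nhdsGT_zero hp0).const_mul (2*C))).add_const a
  have hnum : (fun ε : ℝ => -(2 * C) * ε ^ p + (ε ^ 2 - B * ε ^ (2*p)))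
      ~[𝓝[>] 0] fun ε => -(2 * C) * ε ^ p :=
    IsEquivalent.refl.add_isLittleO
      ((isLittleO_sq_sub_rpow_two_mul hp0 hp2).const_mul_right (by simpa using hC))
  refine (hnum.div ((isEquivalent_const_iff_tendsto ha).2 hD)).congr_left ?_ |>.congr_right ?_
  · filter_upwards [hD.eventually_ne ha] with ε hε
    simp only [Pi.div_apply]
    field_simp
    ring
  · exact Eventually.of_forall fun ε => by simp only [Pi.div_apply, Function.const_apply]; ring

theorem isEquivalent_energyGap (hp1 : 1 < p) (hp2 : p < 2) (ha : a ≠ 0) (hC : C ≠ 0)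
    (t : ℝ → ℝ)
    (ht : ∀ ε : ℝ, t ε =
      ((ε ^ 2 + a) / (B * ε ^ (2*p) + 2 * C * ε ^ p + a)) ^ (1/(2*p - 2))) :
    (fun ε => (1 - t ε ^ 2) * a - t ε ^ 2 * ε ^ 2) ~[𝓝[>] 0] fun ε => (2/(p - 1)) * C * ε ^ p := by
  set r : ℝ → ℝ := fun ε => (ε ^ 2 + a) / (B * ε ^ (2*p) + 2 * C * ε ^ p + a)
  have hr1 := isEquivalent_ratio_sub_one (B := B) (by linarith) hp2 ha hC
  have hr : Tendsto r (𝓝[>] 0) (𝓝 1) := by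
    have h := hr1.symm.tendsto_nhds (by simpa using
      (tendsto_rpow_nhdsGT_zero (by linarith : 0 < p)).const_mul (-(2 * C / a)))
    simpa using h.add_const 1
  have hN : Tendsto (fun ε : ℝ => ε ^ 2 + a) (𝓝[>] 0) (𝓝 a) :=
    tendsto_nhdsWithin_of_tendsto_nhds
      ((by fun_prop : Continuous fun ε : ℝ => ε ^ 2 + a).tendsto' 0 a (by simp))
  have hpow := isEquivalent_rpow_sub_one (by positivity : 1 / (p - 1) ≠ 0) hr
  have hmain : (fun ε => -((ε ^ 2 + a) * (r ε ^ (1 / (p - 1)) - 1)))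
      ~[𝓝[>] 0] fun ε => (2/(p - 1)) * C * ε ^ p := by
    refine ((isEquivalent_const_iff_tendsto ha).2 hN |>.mul
      (hpow.trans (IsEquivalent.refl.mul hr1))).neg.congr_right (Eventually.of_forall fun ε => ?_)
    simp only [Pi.mul_apply, Function.const_apply]
    field_simp
  have hsq : (fun ε : ℝ => -ε ^ 2) =o[𝓝[>] 0] fun ε => (2/(p - 1)) * C * ε ^ p := by
    refine IsLittleO.const_mul_right (by positivity) ?_
    simpa only [Real.rpow_two] using (isLittleO_rpow_rpow_nhdsGT_zero hp2).neg_left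
  refine (hsq.add_isEquivalent hmain).congr_left ?_
  filter_upwards [hr.eventually (lt_mem_nhds one_pos)] with ε hε
  have ht_sq : t ε ^ 2 = r ε ^ (1 / (p - 1)) := by
    rw [ht, ← Real.rpow_natCast, ← Real.rpow_mul hε.le]
    congr 1
    field_simp
    ring
  rw [Pi.add_apply, ht_sq]
  ring

end EnergyGap

theorem stmt9_general (p : ℝ) (hp1 : 1 < p) (hp2 : p < 2) (a B C : ℝ)
    (ha : 0 < a) (hC : 0 < C)
    (t : ℝ → ℝ)
    (ht : ∀ ε : ℝ, t ε =
      ((ε ^ 2 + a) / (B * ε ^ (2*p) + 2 * C * ε ^ p + a)) ^ (1/(2*p - 2))) :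
    (∀ᶠ ε in 𝓝[>] (0:ℝ), 0 < (1 - t ε ^ 2) * a - t ε ^ 2 * ε ^ 2) ∧
    (fun ε => (1 - t ε ^ 2) * a - t ε ^ 2 * ε ^ 2 - (2/(p - 1)) * C * ε ^ p)
      =o[𝓝[>] (0:ℝ)] fun ε => ε ^ p := by
  have h := isEquivalent_energyGap hp1 hp2 ha.ne' hC.ne' t ht
  refine ⟨h.eventually_pos ?_, h.isLittleO.trans_isBigO (isBigO_const_mul_self _ _ _)⟩
  filter_upwards [self_mem_nhdsWithin] with ε (hε : 0 < ε)
  positivity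

/-- For `1 < p < 2` and `C > 0`, the energy comparison quantity
`(1 − t(ε)²)a − t(ε)²ε²` equals `(2/(p−1))Cε^p + o(ε^p)` as `ε → 0⁺`, and in
particular it is positive for all small `ε > 0`. -/
theorem stmt9 (p : ℝ) (hp1 : 1 < p) (hp2 : p < 2) (a B C : ℝ)
    (ha : 0 < a) (hB : 0 < B) (hC : 0 < C)
    (t : ℝ → ℝ)
    (ht : ∀ ε : ℝ, t ε =
      ((ε ^ 2 + a) / (B * ε ^ (2*p) + 2 * C * ε ^ p + a)) ^ (1/(2*p - 2))) :
    (∀ᶠ ε in 𝓝[>] (0:ℝ), 0 < (1 - t ε ^ 2) * a - t ε ^ 2 * ε ^ 2) ∧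
    (fun ε => (1 - t ε ^ 2) * a - t ε ^ 2 * ε ^ 2 - (2/(p - 1)) * C * ε ^ p)
      =o[𝓝[>] (0:ℝ)] fun ε => ε ^ p :=
  stmt9_general p hp1 hp2 a B C ha hC t ht
end

section
/- Let ℓ ≥ 1, p = 2, and (β_{ij}) symmetric with β_{ii} > 0 and β_{ij} ≥ 0 for i ≠ j. If c ∈ M minimizes J on M (with J(c) = (1/2)|c|² − (1/4)Σ β_{ij} c_i² c_j² and M = {c ≠ 0 : |c|² = Σ β_{ij} c_i² c_j²}), then for every index i one has Σ_{j≠i} β_{ij} c_j² ≤ 1. -/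
open Finset

lemma expand_quad {l : ℕ} (β : Fin l → Fin l → ℝ)
    (hsym : ∀ i j, β i j = β j i) (u : Fin l → ℝ) (i : Fin l) (ε : ℝ) :
    ∑ j, ∑ k, β j k * Function.update u i (u i + ε) j * Function.update u i (u i + ε) k
      = (∑ j, ∑ k, β j k * u j * u k) + 2 * ε * (∑ k, β i k * u k) + ε ^ 2 * β i i := by
  have hupd : Function.update u i (u i + ε) = fun k => u k + (if k = i then ε else 0) := by
    funext k
    by_cases hk : k = i
    · subst hk; simp
    · simp [Function.update_of_ne hk, hk]
  rw [hupd]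
  have expand1 : ∀ j k : Fin l,
      β j k * (u j + (if j = i then ε else 0)) * (u k + (if k = i then ε else 0))
      = β j k * u j * u k + (if j = i then ε * (β j k * u k) else 0)
        + (if k = i then ε * (β j k * u j) else 0)
        + (if j = i then (if k = i then ε ^ 2 * β j k else 0) else 0) := by
    intro j k; by_cases hj : j = i <;> by_cases hk : k = i <;> simp [hj, hk] <;> ring
  simp only [expand1, Finset.sum_add_distrib]
  have h2 : ∀ j : Fin l, ∑ k : Fin l, (if j = i then ε * (β j k * u k) else 0)
      = if j = i then ε * ∑ k, β j k * u k else 0 := by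
    intro j; by_cases hj : j = i <;> simp [hj, Finset.mul_sum]
  have h4 : ∀ j : Fin l, ∑ k : Fin l, (if j = i then (if k = i then ε ^ 2 * β j k else 0) else 0)
      = if j = i then ε ^ 2 * β j i else 0 := by
    intro j; by_cases hj : j = i <;> simp [hj]
  simp only [h2, h4, Finset.sum_ite_eq', Finset.mem_univ, if_true]
  have h3 : (∑ j : Fin l, ε * (β j i * u j)) = ε * ∑ j, β i j * u j := by
    rw [Finset.mul_sum]; apply Finset.sum_congr rfl; intro j _; rw [hsym j i]
  rw [h3]; ring

/-- For `p = 2`, a minimizer of `J` on the purely cooperative algebraic Nehari set `M`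
satisfies `∑_{j≠i} β_{ij} c_j² ≤ 1` for every index `i`. -/
theorem stmt11 (l : ℕ) (hl : 1 ≤ l)
    (β : Fin l → Fin l → ℝ)
    (hsym : ∀ i j, β i j = β j i)
    (hdiag : ∀ i, 0 < β i i)
    (hoff : ∀ i j, i ≠ j → 0 ≤ β i j)
    (c : Fin l → ℝ) (hc : c ≠ 0)
    (hM : ∑ i, (c i) ^ 2 = ∑ i, ∑ j, β i j * (c i) ^ 2 * (c j) ^ 2)
    (hmin : ∀ c' : Fin l → ℝ, c' ≠ 0 →
      ∑ i, (c' i) ^ 2 = ∑ i, ∑ j, β i j * (c' i) ^ 2 * (c' j) ^ 2 →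
      (1/2) * ∑ i, (c i) ^ 2
          - (1/4) * ∑ i, ∑ j, β i j * (c i) ^ 2 * (c j) ^ 2
        ≤ (1/2) * ∑ i, (c' i) ^ 2
          - (1/4) * ∑ i, ∑ j, β i j * (c' i) ^ 2 * (c' j) ^ 2) :
    ∀ i, ∑ j ∈ Finset.univ.erase i, β i j * (c j) ^ 2 ≤ 1 := by
  intro i
  set u : Fin l → ℝ := fun j => (c j) ^ 2 with hu
  set B : ℝ := ∑ j, u j with hB
  set K : ℝ := ∑ k, β i k * u k with hK
  have hBpos : 0 < B := by
    obtain ⟨j, hj⟩ := Function.ne_iff.mp hc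
    have h1 : 0 < u j := by
      have hrw : u j = (c j) ^ 2 := rfl
      rw [hrw]
      exact lt_of_le_of_ne (sq_nonneg (c j)) (Ne.symm (pow_ne_zero 2 hj))
    have h2 : u j ≤ B := Finset.single_le_sum (fun k _ => sq_nonneg (c k)) (Finset.mem_univ j)
    linarith
  have hKnn : 0 ≤ K := by
    apply Finset.sum_nonneg
    intro k _
    by_cases hk : i = k
    · subst hk; have := (hdiag i).le; positivity
    · have := hoff i k hk; positivity
  have huinn : 0 ≤ u i := sq_nonneg _
  have key : ∀ ε : ℝ, 0 < ε → B * (B + 2 * ε * K + ε ^ 2 * β i i) ≤ (B + ε) ^ 2 := by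
    intro ε hε
    set Nε : ℝ := B + 2 * ε * K + ε ^ 2 * β i i with hNε
    have hNpos : 0 < Nε := by
      have h1 : 0 ≤ 2 * ε * K := by nlinarith [mul_nonneg hε.le hKnn]
      have h2 : 0 ≤ ε ^ 2 * β i i := mul_nonneg (sq_nonneg ε) (hdiag i).le
      have : Nε = B + 2 * ε * K + ε ^ 2 * β i i := hNε
      linarith
    set x : ℝ := Real.sqrt (u i + ε) with hx
    have hxpos : 0 < x := Real.sqrt_pos.mpr (by linarith)
    have hx2 : x ^ 2 = u i + ε := Real.sq_sqrt (by linarith)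
    set v : Fin l → ℝ := Function.update c i x with hv
    have hv2 : ∀ j, (v j) ^ 2 = Function.update u i (u i + ε) j := by
      intro j
      by_cases hj : j = i
      · subst hj; simp [hv, hx2]
      · simp [hv, Function.update_of_ne hj, hu]
    have hSv : ∑ j, (v j) ^ 2 = B + ε := by
      simp only [hv2]
      rw [Finset.sum_update_of_mem (Finset.mem_univ i)]
      have h5 : ∑ j ∈ Finset.univ \ {i}, u j = ∑ j ∈ Finset.univ.erase i, u j := by
        rw [Finset.sdiff_singleton_eq_erase]
      have h6 : B = u i + ∑ j ∈ Finset.univ.erase i, u j := by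
        rw [hB, ← Finset.add_sum_erase _ u (Finset.mem_univ i)]
      rw [h5]; linarith
    have hNv : ∑ j, ∑ k, β j k * (v j) ^ 2 * (v k) ^ 2 = Nε := by
      simp only [hv2]
      rw [expand_quad β hsym u i ε]
      have : (∑ j, ∑ k, β j k * u j * u k) = B := hM.symm
      rw [this]
    have hBεpos : 0 < B + ε := by linarith
    set t : ℝ := Real.sqrt ((B + ε) / Nε) with ht
    have htpos : 0 < t := Real.sqrt_pos.mpr (div_pos hBεpos hNpos)
    have ht2 : t ^ 2 = (B + ε) / Nε := Real.sq_sqrt (div_pos hBεpos hNpos).le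
    set c' : Fin l → ℝ := fun j => t * v j with hc'
    have hc'ne : c' ≠ 0 := by
      intro h
      have hi : c' i = 0 := by rw [h]; rfl
      have h7 : c' i = t * x := by simp [hc', hv]
      rw [h7] at hi
      exact absurd hi (mul_pos htpos hxpos).ne'
    have hsum1 : ∑ j, (c' j) ^ 2 = t ^ 2 * (B + ε) := by
      simp only [hc', mul_pow, ← Finset.mul_sum, hSv]
    have hsum2 : ∑ j, ∑ k, β j k * (c' j) ^ 2 * (c' k) ^ 2 = t ^ 4 * Nε := by
      have step : ∀ j k : Fin l, β j k * (c' j) ^ 2 * (c' k) ^ 2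
          = t ^ 4 * (β j k * (v j) ^ 2 * (v k) ^ 2) := by
        intro j k; simp only [hc', mul_pow]; ring
      simp only [step, ← Finset.mul_sum, hNv]
    have hts : t ^ 2 * (B + ε) = t ^ 4 * Nε := by
      have h8 : t ^ 4 = t ^ 2 * t ^ 2 := by ring
      rw [h8, ht2]
      field_simp
    have hconstraint : ∑ j, (c' j) ^ 2 = ∑ j, ∑ k, β j k * (c' j) ^ 2 * (c' k) ^ 2 := by
      rw [hsum1, hsum2, hts]
    have hm := hmin c' hc'ne hconstraint
    rw [← hM, hsum1, hsum2, ← hts] at hm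
    have hBle : B ≤ t ^ 2 * (B + ε) := by linarith
    rw [ht2, div_mul_eq_mul_div, le_div_iff₀ hNpos] at hBle
    nlinarith [hBle]
  have hKsplit : K = β i i * u i + ∑ j ∈ Finset.univ.erase i, β i j * u j := by
    rw [hK, ← Finset.add_sum_erase _ (fun k => β i k * u k) (Finset.mem_univ i)]
  have hgoal : ∀ δ : ℝ, 0 < δ → ∑ j ∈ Finset.univ.erase i, β i j * (c j) ^ 2 ≤ 1 + δ := by
    intro δ hδ
    have hε : (0:ℝ) < 2 * B * δ := by nlinarith [mul_pos hBpos hδ]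
    have hk := key (2 * B * δ) hε
    have hβ := (hdiag i).le
    have hpos : (0:ℝ) < 4 * B ^ 2 * δ := by nlinarith [pow_pos hBpos 2, mul_pos (pow_pos hBpos 2) hδ]
    have hKle : K ≤ 1 + δ := by
      apply le_of_mul_le_mul_left _ hpos
      have hB3 : 0 ≤ B ^ 3 * δ ^ 2 * β i i :=
        mul_nonneg (mul_nonneg (pow_pos hBpos 3).le (sq_nonneg δ)) hβ
      nlinarith [hk, hB3]
    have hrw : ∑ j ∈ Finset.univ.erase i, β i j * (c j) ^ 2
        = ∑ j ∈ Finset.univ.erase i, β i j * u j := rfl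
    rw [hrw]
    nlinarith [mul_nonneg hβ huinn, hKle, hKsplit]
  have := le_of_forall_pos_le_add hgoal
  linarith [this]
end

section
/- Let p > 1 and let t : [0, ε₀) → (0, ∞) be differentiable with t(0) = 1 and suppose lim_{ε→0⁺} t'(ε)/ε^{p−1} = τ ∈ ℝ. Then for 1 < p < 2, t(ε)^p = 1 + τ ε^p + o(ε^p) as ε → 0⁺, and consequently for two such functions t_h, t_k with limits τ_h, τ_k, one has t_h(ε)^p t_k(ε)^p − 1 = (τ_h + τ_k) ε^p + o(ε^p). -/
open Topology Filter Asymptotics Set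

/-!
L'Hôpital's rule turns `t'(ε)/ε^{p-1} → τ` into `(t(ε) - 1)/ε^p → τ/p`, and the chain rule for
`x ↦ x^p` at `1` multiplies this limit by `p`, so `(t(ε)^p - 1)/ε^p → τ`. For a product,
`(uv - 1)/ε^p = u (v - 1)/ε^p + (u - 1)/ε^p` with `u → 1`, so the limits add.
-/

section Ratio

variable {α 𝕜 : Type*} [NontriviallyNormedField 𝕜] {l : Filter α} {g : α → 𝕜}

theorem isLittleO_sub_mul_of_tendsto_div {f : α → 𝕜} {c : 𝕜} (hg : ∀ᶠ x in l, g x ≠ 0)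
    (h : Tendsto (fun x => f x / g x) l (𝓝 c)) : (fun x => f x - c * g x) =o[l] g := by
  rw [isLittleO_iff_tendsto' (hg.mono fun x hx h0 => absurd h0 hx)]
  refine (sub_self c ▸ h.sub_const c).congr' ?_
  filter_upwards [hg] with x hx
  rw [sub_div, mul_div_cancel_right₀ c hx]

theorem DifferentiableAt.tendsto_comp_sub_div {f : 𝕜 → 𝕜} {a σ : 𝕜} {u : α → 𝕜}
    (hf : DifferentiableAt 𝕜 f a) (hu : Tendsto u l (𝓝 a))
    (hu' : Tendsto (fun x => (u x - a) / g x) l (𝓝 σ)) :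
    Tendsto (fun x => (f (u x) - f a) / g x) l (𝓝 (deriv f a * σ)) := by
  have hdslope : Tendsto (fun x => dslope f a (u x)) l (𝓝 (deriv f a)) :=
    dslope_same f a ▸ (continuousAt_dslope_same.mpr hf).tendsto.comp hu
  refine (hdslope.mul hu').congr fun x => ?_
  rw [← sub_smul_dslope f a (u x), smul_eq_mul]
  ring

theorem tendsto_mul_sub_one_div {u v : α → 𝕜} {σ ρ : 𝕜} (hg0 : Tendsto g l (𝓝 0))
    (hg : ∀ᶠ x in l, g x ≠ 0) (hu : Tendsto (fun x => (u x - 1) / g x) l (𝓝 σ))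
    (hv : Tendsto (fun x => (v x - 1) / g x) l (𝓝 ρ)) :
    Tendsto (fun x => (u x * v x - 1) / g x) l (𝓝 (σ + ρ)) := by
  have hu1 : Tendsto u l (𝓝 1) := by
    have h := (hu.mul hg0).add_const 1
    rw [mul_zero, zero_add] at h
    refine h.congr' ?_
    filter_upwards [hg] with x hx
    rw [div_mul_cancel₀ _ hx, sub_add_cancel]
  have h := (hu1.mul hv).add hu
  rw [one_mul, add_comm] at h
  exact h.congr fun x => by ring

end Ratio

section Rpow

variable {p ε₀ τ : ℝ} {t t' : ℝ → ℝ}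

theorem tendsto_rpow_nhdsGT_zero_s15 (hp : 0 < p) :
    Tendsto (fun ε : ℝ => ε ^ p) (𝓝[>] 0) (𝓝 0) := by
  have h := (Real.continuousAt_rpow_const 0 p (Or.inr hp.le)).tendsto
  rw [Real.zero_rpow hp.ne'] at h
  exact h.mono_left nhdsWithin_le_nhds

theorem tendsto_sub_div_rpow_of_tendsto_deriv_div (hp : 0 < p) (hε₀ : 0 < ε₀) {c : ℝ}
    (ht : Tendsto t (𝓝[>] 0) (𝓝 c)) (htd : ∀ ε ∈ Ioo 0 ε₀, HasDerivAt t (t' ε) ε)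
    (hτ : Tendsto (fun ε => t' ε / ε ^ (p - 1)) (𝓝[>] 0) (𝓝 τ)) :
    Tendsto (fun ε => (t ε - c) / ε ^ p) (𝓝[>] 0) (𝓝 (τ / p)) := by
  refine HasDerivAt.lhopital_zero_right_on_Ioo hε₀ (fun ε hε => (htd ε hε).sub_const c)
    (fun ε hε => Real.hasDerivAt_rpow_const (Or.inl hε.1.ne'))
    (fun ε hε => (mul_pos hp (Real.rpow_pos_of_pos hε.1 _)).ne')
    (sub_self c ▸ ht.sub_const c) (tendsto_rpow_nhdsGT_zero_s15 hp) ?_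
  exact (hτ.div_const p).congr fun ε => by rw [div_div, mul_comm]

theorem tendsto_rpow_sub_one_div_rpow_of_tendsto_deriv_div (hp : 0 < p) (hε₀ : 0 < ε₀)
    (ht : Tendsto t (𝓝[>] 0) (𝓝 1)) (htd : ∀ ε ∈ Ioo 0 ε₀, HasDerivAt t (t' ε) ε)
    (hτ : Tendsto (fun ε => t' ε / ε ^ (p - 1)) (𝓝[>] 0) (𝓝 τ)) :
    Tendsto (fun ε => (t ε ^ p - 1) / ε ^ p) (𝓝[>] 0) (𝓝 τ) := by
  have hpow : HasDerivAt (fun x : ℝ => x ^ p) p 1 := by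
    simpa using Real.hasDerivAt_rpow_const (p := p) (Or.inl one_ne_zero)
  have h := hpow.differentiableAt.tendsto_comp_sub_div ht
    (tendsto_sub_div_rpow_of_tendsto_deriv_div hp hε₀ ht htd hτ)
  rwa [hpow.deriv, Real.one_rpow, mul_div_cancel₀ τ hp.ne'] at h

end Rpow

theorem stmt15_general (p : ℝ) (hp1 : 1 < p) (ε₀ : ℝ) (hε₀ : 0 < ε₀)
    (th tk th' tk' : ℝ → ℝ) (τh τk : ℝ)
    (hth0 : th 0 = 1) (htk0 : tk 0 = 1)
    (hthd : ∀ ε ∈ Ioo (0:ℝ) ε₀, HasDerivAt th (th' ε) ε)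
    (htkd : ∀ ε ∈ Ioo (0:ℝ) ε₀, HasDerivAt tk (tk' ε) ε)
    (hthc : ContinuousWithinAt th (Ici (0:ℝ)) 0)
    (htkc : ContinuousWithinAt tk (Ici (0:ℝ)) 0)
    (hτh : Tendsto (fun ε => th' ε / ε ^ (p - 1)) (𝓝[>] (0:ℝ)) (𝓝 τh))
    (hτk : Tendsto (fun ε => tk' ε / ε ^ (p - 1)) (𝓝[>] (0:ℝ)) (𝓝 τk)) :
    ((fun ε => th ε ^ p - (1 + τh * ε ^ p)) =o[𝓝[>] (0:ℝ)] fun ε => ε ^ p) ∧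
    ((fun ε => th ε ^ p * tk ε ^ p - 1 - (τh + τk) * ε ^ p)
        =o[𝓝[>] (0:ℝ)] fun ε => ε ^ p) := by
  have hp : 0 < p := by linarith
  have hpos : ∀ᶠ ε in 𝓝[>] (0:ℝ), ε ^ p ≠ 0 := by
    filter_upwards [self_mem_nhdsWithin] with ε hε
    exact (Real.rpow_pos_of_pos hε p).ne'
  have hGT : 𝓝[>] (0:ℝ) ≤ 𝓝[Ici 0] 0 := nhdsWithin_mono _ Ioi_subset_Ici_self
  have Th := tendsto_rpow_sub_one_div_rpow_of_tendsto_deriv_div hp hε₀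
    (hth0 ▸ hthc.tendsto.mono_left hGT) hthd hτh
  have Tk := tendsto_rpow_sub_one_div_rpow_of_tendsto_deriv_div hp hε₀
    (htk0 ▸ htkc.tendsto.mono_left hGT) htkd hτk
  refine ⟨?_, ?_⟩
  · exact (isLittleO_sub_mul_of_tendsto_div hpos Th).congr_left fun ε => by ring
  · exact isLittleO_sub_mul_of_tendsto_div hpos
      (tendsto_mul_sub_one_div (tendsto_rpow_nhdsGT_zero_s15 hp) hpos Th Tk)

/-- Asymptotic expansion (3.8): if `t` is differentiable on `[0, ε₀)` with `t(0) = 1` and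
`t'(ε)/ε^{p−1} → τ` as `ε → 0⁺`, then for `1 < p < 2` one has
`t(ε)^p = 1 + τε^p + o(ε^p)`; for two such functions,
`t_h(ε)^p t_k(ε)^p − 1 = (τ_h + τ_k)ε^p + o(ε^p)`. -/
theorem stmt15 (p : ℝ) (hp1 : 1 < p) (hp2 : p < 2) (ε₀ : ℝ) (hε₀ : 0 < ε₀)
    (th tk th' tk' : ℝ → ℝ) (τh τk : ℝ)
    (hthpos : ∀ ε ∈ Ico (0:ℝ) ε₀, 0 < th ε)
    (htkpos : ∀ ε ∈ Ico (0:ℝ) ε₀, 0 < tk ε)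
    (hth0 : th 0 = 1) (htk0 : tk 0 = 1)
    (hthd : ∀ ε ∈ Ioo (0:ℝ) ε₀, HasDerivAt th (th' ε) ε)
    (htkd : ∀ ε ∈ Ioo (0:ℝ) ε₀, HasDerivAt tk (tk' ε) ε)
    (hthc : ContinuousWithinAt th (Ici (0:ℝ)) 0)
    (htkc : ContinuousWithinAt tk (Ici (0:ℝ)) 0)
    (hτh : Tendsto (fun ε => th' ε / ε ^ (p - 1)) (𝓝[>] (0:ℝ)) (𝓝 τh))
    (hτk : Tendsto (fun ε => tk' ε / ε ^ (p - 1)) (𝓝[>] (0:ℝ)) (𝓝 τk)) :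
    ((fun ε => th ε ^ p - (1 + τh * ε ^ p)) =o[𝓝[>] (0:ℝ)] fun ε => ε ^ p) ∧
    ((fun ε => th ε ^ p * tk ε ^ p - 1 - (τh + τk) * ε ^ p)
        =o[𝓝[>] (0:ℝ)] fun ε => ε ^ p) :=
  stmt15_general p hp1 ε₀ hε₀ th tk th' tk' τh τk hth0 htk0 hthd htkd hthc htkc hτh hτk
end

section
/- Let H₁, …, H_q be real Hilbert spaces, 𝒮_h the unit sphere of H_h, 𝒯 = 𝒮₁ × ⋯ × 𝒮_q, and let 𝒩 ⊆ H₁ × ⋯ × H_q be a set such that each ū = (ū₁, …, ū_q) ∈ 𝒩 has ū_h ≠ 0 for all h. Suppose 𝒩 is closed, and let 𝒰 = {u ∈ 𝒯 : s u ∈ 𝒩 for some s ∈ (0,∞)^q} where s u := (s₁u₁, …, s_q u_q), and assume for each u ∈ 𝒰 the s = s_u with s_u u ∈ 𝒩 is unique and depends continuously on u, with 𝒰 open in 𝒯. Then the map 𝒰 → 𝒩, u ↦ s_u u, is a homeomorphism with inverse (ū₁, …, ū_q) ↦ (ū₁/‖ū₁‖, …, ū_q/‖ū_q‖); moreover if u_n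 ∈ 𝒰 converges to u ∈ ∂𝒰 (boundary in 𝒯), then |s_{u_n}| → ∞. -/
open Topology Filter

/-- Abstract Lemma 2.3(iii)–(iv): the map `u ↦ s_u u` is a homeomorphism from the open
set `𝒰 ⊆ 𝒯` (product of unit spheres) onto the Nehari-type set `𝒩`, with inverse
`ub ↦ (ub₁/‖ub₁‖, …, ub_q/‖ub_q‖)`; and if `u_n ∈ 𝒰` converges to a boundary point of `𝒰`
in `𝒯`, then `|s_{u_n}| → ∞`. -/
theorem stmt17 (q : ℕ) (hq : 1 ≤ q)
    (H : Fin q → Type*) [∀ h, NormedAddCommGroup (H h)]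
    [∀ h, InnerProductSpace ℝ (H h)] [∀ h, CompleteSpace (H h)]
    (N : Set (∀ h, H h))
    (hN0 : ∀ u ∈ N, ∀ h, u h ≠ 0) (hNclosed : IsClosed N)
    (T : Set (∀ h, H h)) (hT : T = {u | ∀ h, ‖u h‖ = 1})
    (U : Set (∀ h, H h))
    (hU : U = {u ∈ T | ∃ s : Fin q → ℝ, (∀ h, 0 < s h) ∧ (fun h => s h • u h) ∈ N})
    (σ : (∀ h, H h) → Fin q → ℝ)
    (hσ : ∀ u ∈ U, (∀ h, 0 < σ u h) ∧ (fun h => σ u h • u h) ∈ N)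
    (huniq : ∀ u ∈ U, ∀ s : Fin q → ℝ, (∀ h, 0 < s h) →
      (fun h => s h • u h) ∈ N → s = σ u)
    (hσcont : ContinuousOn σ U)
    (hUopen : ∃ V : Set (∀ h, H h), IsOpen V ∧ U = V ∩ T) :
    (Set.BijOn (fun u => fun h => σ u h • u h) U N) ∧
    ContinuousOn (fun u => fun h => σ u h • u h) U ∧
    (Set.InvOn (fun u => fun h => ‖u h‖⁻¹ • u h)
      (fun u => fun h => σ u h • u h) U N) ∧
    ContinuousOn (fun u : (∀ h, H h) => fun h => ‖u h‖⁻¹ • u h) N ∧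
    (∀ (un : ℕ → ∀ h, H h) (u : ∀ h, H h), (∀ n, un n ∈ U) →
      u ∈ T → u ∉ U → Tendsto un atTop (𝓝 u) →
      Tendsto (fun n => ‖σ (un n)‖) atTop atTop) := by
  -- u ∈ U implies u ∈ T (unit spheres)
  have hUT : ∀ u ∈ U, ∀ h, ‖u h‖ = 1 := by
    intro u hu h
    rw [hU] at hu
    have := hu.1
    rw [hT] at this
    exact this h
  -- G maps N into U, with σ (G ub) = fun h => ‖ub h‖
  have hGU : ∀ ub ∈ N, (fun h => ‖ub h‖⁻¹ • ub h) ∈ U ∧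
      σ (fun h => ‖ub h‖⁻¹ • ub h) = fun h => ‖ub h‖ := by
    intro ub hub
    have hnz : ∀ h, ‖ub h‖ ≠ 0 := fun h => norm_ne_zero_iff.mpr (hN0 ub hub h)
    have hsm : (fun h => ‖ub h‖ • (‖ub h‖⁻¹ • ub h)) = ub := by
      funext h
      rw [smul_smul, mul_inv_cancel₀ (hnz h), one_smul]
    have hGUmem : (fun h => ‖ub h‖⁻¹ • ub h) ∈ U := by
      rw [hU]
      refine ⟨?_, fun h => ‖ub h‖, fun h => norm_pos_iff.mpr (hN0 ub hub h), ?_⟩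
      · rw [hT]
        intro h
        rw [norm_smul, norm_inv, norm_norm, inv_mul_cancel₀ (hnz h)]
      · rw [hsm]; exact hub
    refine ⟨hGUmem, ?_⟩
    exact (huniq _ hGUmem (fun h => ‖ub h‖)
      (fun h => norm_pos_iff.mpr (hN0 ub hub h)) (by rw [hsm]; exact hub)).symm
  -- left inverse
  have hleft : ∀ u ∈ U, (fun h => ‖σ u h • u h‖⁻¹ • (σ u h • u h)) = u := by
    intro u hu
    funext h
    have hpos := (hσ u hu).1 h
    have : ‖σ u h • u h‖ = σ u h := by
      rw [norm_smul, hUT u hu h, mul_one, Real.norm_eq_abs, abs_of_pos hpos]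
    rw [this, smul_smul, inv_mul_cancel₀ hpos.ne', one_smul]
  -- right inverse
  have hright : ∀ ub ∈ N,
      (fun h => σ (fun h' => ‖ub h'‖⁻¹ • ub h') h • (‖ub h‖⁻¹ • ub h)) = ub := by
    intro ub hub
    have hnz : ∀ h, ‖ub h‖ ≠ 0 := fun h => norm_ne_zero_iff.mpr (hN0 ub hub h)
    funext h
    rw [(hGU ub hub).2]
    rw [smul_smul, mul_inv_cancel₀ (hnz h), one_smul]
  have hinv : Set.InvOn (fun u => fun h => ‖u h‖⁻¹ • u h)
      (fun u => fun h => σ u h • u h) U N := by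
    constructor
    · intro u hu
      exact hleft u hu
    · intro ub hub
      exact hright ub hub
  have hmapF : Set.MapsTo (fun u => fun h => σ u h • u h) U N :=
    fun u hu => (hσ u hu).2
  have hmapG : Set.MapsTo (fun u => fun h => ‖u h‖⁻¹ • u h) N U :=
    fun ub hub => (hGU ub hub).1
  have hFcont : ContinuousOn (fun u => fun h => σ u h • u h) U := by
    rw [continuousOn_pi]
    intro h
    exact ((continuous_apply h).comp_continuousOn hσcont).smul
      (continuous_apply h).continuousOn
  have hGcont : ContinuousOn (fun u : (∀ h, H h) => fun h => ‖u h‖⁻¹ • u h) N := by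
    rw [continuousOn_pi]
    intro h
    exact (((continuous_apply h).norm.continuousOn).inv₀
      (fun u hu => norm_ne_zero_iff.mpr (hN0 u hu h))).smul
      (continuous_apply h).continuousOn
  refine ⟨hinv.bijOn hmapF hmapG, hFcont, hinv, hGcont, ?_⟩
  -- blow-up at the boundary
  intro un u hun huT huU htend
  by_contra hcon
  rw [tendsto_atTop] at hcon
  push_neg at hcon
  obtain ⟨b, hb⟩ := hcon
  obtain ⟨φ, hφ, hφb⟩ := Filter.extraction_of_frequently_atTop hb
  have hcomp : IsCompact (Metric.closedBall (0 : Fin q → ℝ) b) :=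
    isCompact_closedBall _ _
  obtain ⟨s, hs, ψ, hψ, hσtend⟩ := hcomp.tendsto_subseq
    (x := fun n => σ (un (φ n)))
    (fun n => mem_closedBall_zero_iff.mpr (le_of_lt (hφb n)))
  have hun' : Tendsto (fun n => un (φ (ψ n))) atTop (𝓝 u) :=
    htend.comp (hφ.comp hψ).tendsto_atTop
  have hcomptend : ∀ h, Tendsto (fun n => σ (un (φ (ψ n))) h) atTop (𝓝 (s h)) :=
    fun h => ((continuous_apply h).tendsto s).comp hσtend
  have hlim : Tendsto (fun n => fun h => σ (un (φ (ψ n))) h • un (φ (ψ n)) h)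
      atTop (𝓝 (fun h => s h • u h)) := by
    rw [tendsto_pi_nhds]
    intro h
    exact (hcomptend h).smul (((continuous_apply h).tendsto u).comp hun')
  have hmem : (fun h => s h • u h) ∈ N :=
    hNclosed.mem_of_tendsto hlim
      (Filter.Eventually.of_forall fun n => (hσ _ (hun _)).2)
  have hspos : ∀ h, 0 < s h := by
    intro h
    have hnonneg : 0 ≤ s h :=
      le_of_tendsto_of_tendsto' tendsto_const_nhds (hcomptend h)
        (fun n => ((hσ _ (hun _)).1 h).le)
    rcases hnonneg.lt_or_eq with hlt | heq
    · exact hlt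
    · exfalso
      apply hN0 _ hmem h
      rw [← heq, zero_smul]
  exact huU (by rw [hU]; exact ⟨huT, s, hspos, hmem⟩)
end
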